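/- arXiv:2204.03221 — 8 statements merged into one kernel-verified Lean document; each statement's English description precedes it below -/
import Mathlib

section
/- Let R, C, μ > 0 and let n ≥ 1 be an integer with Rμ/C ≥ n + 1. Then the social benefit rate function f_n is either concave and monotone increasing on [0,∞), or unimodal on [0,∞): there exists ρ* > 0 such that f_n is strictly increasing on [0, ρ*] and strictly decreasing on [ρ*, ∞). -/
/-- The social benefit rate function `f_n` of Naor's observable M/M/1 queue. -/
noncomputable def socialRate (R C μ : ℝ) (n : ℕ) (ρ : ℝ) : ℝ :=
  if ρ = 1 then R * μ * ((n : ℝ) / ((n : ℝ) + 1)) - C * ((n : ℝ) / 2)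
  else R * μ * (ρ * (1 - ρ ^ n) / (1 - ρ ^ (n + 1)))
      - C * (ρ / (1 - ρ) - ((n : ℝ) + 1) * ρ ^ (n + 1) / (1 - ρ ^ (n + 1)))

/-!
With `aₖ = Rμ·[k ≥ 1] - C·k` the benefit rate when `k` customers are present, `f_n(ρ)` is the
mean of `aₖ` under the truncated geometric weights `ρᵏ`, `k ≤ n`. Writing `f_n = P / Q`, the
quotient rule gives `ρ (P'Q - PQ')(ρ) = ∑ₛ cₛ ρˢ` with
`2 cₛ = ∑_{j + k = s, j, k ≤ n} (aₖ - aⱼ)(k - j)`.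
For `s ≤ n` this is `cₛ = s (Rμ - C (s+1)(s+2)/6)`, whose sign can only switch from `+` to `-`
as `s` grows; for `s > n` both indices are positive, so every term is `-C (k - j)² ≤ 0`, and
`c_{2n-1} = -C`. Since `c₁ = Rμ - C > 0`, the coefficients change sign exactly once when
`n ≥ 2`, so by Descartes' rule the derivative has a single positive zero, where it changes sign
from `+` to `-`. For `n = 1`, `f₁(ρ) = (Rμ - C) ρ / (1 + ρ)` is concave and increasing.
-/

open Finset Filter Topology
open Set (Ioi Icc Ici)

section SignChange

variable (c : ℕ → ℝ)

lemma sum_mul_pow_div_pow_eq_sum_mul_zpow (d M : ℕ) {x : ℝ} (hx : x ≠ 0) :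
    (∑ m ∈ range d, c m * x ^ m) / x ^ M = ∑ m ∈ range d, c m * x ^ ((m : ℤ) - M) := by
  rw [sum_div]
  refine sum_congr rfl fun m _ => ?_
  rw [zpow_sub₀ hx, zpow_natCast, zpow_natCast, mul_div_assoc]

lemma strictAntiOn_sum_mul_pow_div_pow {d M : ℕ} (h0 : 0 < c 0) (hM : 0 < M)
    (hlt : ∀ m < M, 0 ≤ c m) (hge : ∀ m, M ≤ m → c m ≤ 0) :
    StrictAntiOn (fun x => (∑ m ∈ range (d + 1), c m * x ^ m) / x ^ M) (Ioi 0) := by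
  intro x (hx : 0 < x) y (hy : 0 < y) hxy
  simp only [sum_mul_pow_div_pow_eq_sum_mul_zpow c _ _ hx.ne',
    sum_mul_pow_div_pow_eq_sum_mul_zpow c _ _ hy.ne']
  have zpow_anti : ∀ e : ℤ, e < 0 → y ^ e < x ^ e := fun e he => by
    simpa only [Real.rpow_intCast] using
      Real.rpow_lt_rpow_of_neg hx hxy (by exact_mod_cast he : (e : ℝ) < 0)
  refine sum_lt_sum (fun m _ => ?_) ⟨0, by simp, ?_⟩
  · rcases lt_or_ge m M with hm | hm
    · exact mul_le_mul_of_nonneg_left (zpow_anti _ (by omega)).le (hlt m hm)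
    · exact mul_le_mul_of_nonpos_left (zpow_le_zpow_left₀ (by omega) hx.le hxy.le) (hge m hm)
  · exact mul_lt_mul_of_pos_left (zpow_anti _ (by omega)) h0

lemma tendsto_sum_mul_pow_div_pow_atTop (d : ℕ) :
    Tendsto (fun x => (∑ m ∈ range (d + 1), c m * x ^ m) / x ^ d) atTop (𝓝 (c d)) := by
  have hterm : ∀ m ∈ range d, Tendsto (fun x : ℝ => c m * x ^ ((m : ℤ) - d)) atTop (𝓝 0) :=
    fun m hm => by
      simpa using (tendsto_zpow_atTop_zero (by simp at hm; omega)).const_mul (c m)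
  have hlim := (tendsto_finsetSum _ hterm).add_const (c d)
  rw [sum_const_zero, zero_add] at hlim
  refine hlim.congr' ?_
  filter_upwards [eventually_gt_atTop 0] with x hx
  rw [sum_mul_pow_div_pow_eq_sum_mul_zpow c _ _ hx.ne', sum_range_succ, sub_self, zpow_zero,
    mul_one]

theorem exists_sign_change_of_coeff_sign_change {d : ℕ} (h0 : 0 < c 0) (hd : c d < 0)
    (hsign : ∀ i j, i ≤ j → c i < 0 → c j ≤ 0) :
    ∃ r > 0, (∀ x ∈ Set.Ioo 0 r, 0 < ∑ m ∈ range (d + 1), c m * x ^ m) ∧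
      ∀ x ∈ Ioi r, ∑ m ∈ range (d + 1), c m * x ^ m < 0 := by
  classical
  set p : ℝ → ℝ := fun x => ∑ m ∈ range (d + 1), c m * x ^ m
  have hpc : Continuous p := by fun_prop
  have hex : ∃ m, c m < 0 := ⟨d, hd⟩
  have hM : 0 < Nat.find hex := Nat.pos_of_ne_zero fun h => by
    have := Nat.find_spec hex
    rw [h] at this
    linarith
  have hanti : StrictAntiOn (fun x => p x / x ^ Nat.find hex) (Ioi 0) :=
    strictAntiOn_sum_mul_pow_div_pow c h0 hM
      (fun m hm => not_lt.1 (Nat.find_min hex hm)) fun m hm => hsign _ m hm (Nat.find_spec hex)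
  have hp0 : p 0 = c 0 := by simp [p, sum_range_succ']
  obtain ⟨x₀, hpx₀, hx₀⟩ : ∃ x₀, 0 < p x₀ ∧ 0 < x₀ :=
    ((eventually_nhdsWithin_of_eventually_nhds
      (continuousAt_const.eventually_lt hpc.continuousAt (hp0 ▸ h0))).and
      self_mem_nhdsWithin).exists (f := 𝓝[>] (0 : ℝ))
  obtain ⟨x₁, hpx₁, hx₀x₁⟩ : ∃ x₁, p x₁ < 0 ∧ x₀ < x₁ :=
    (((tendsto_sum_mul_pow_div_pow_atTop c d).eventually_lt_const hd).and
      (eventually_gt_atTop x₀)).exists.imp fun x ⟨hx, hx₀x⟩ =>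
        ⟨neg_of_div_neg_left hx (pow_pos (hx₀.trans hx₀x) _).le, hx₀x⟩
  obtain ⟨r, hr, hpr⟩ :=
    intermediate_value_Icc' hx₀x₁.le hpc.continuousOn ⟨hpx₁.le, hpx₀.le⟩
  have hr0 : 0 < r := hx₀.trans_le hr.1
  refine ⟨r, hr0, fun x hx => ?_, fun x hx => ?_⟩
  · have := hanti hx.1 hr0 hx.2
    beta_reduce at this
    rw [hpr, zero_div] at this
    exact (div_pos_iff_of_pos_right (pow_pos hx.1 _)).1 this
  · have := hanti hr0 (hr0.trans hx) hx
    beta_reduce at this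
    rw [hpr, zero_div] at this
    exact neg_of_div_neg_left this (pow_pos (hr0.trans hx) _).le

end SignChange

section GeomWeightedMean

variable (a : ℕ → ℝ) (n : ℕ)

noncomputable def geomWeightedMean (x : ℝ) : ℝ :=
  (∑ k ∈ range (n + 1), a k * x ^ k) / ∑ k ∈ range (n + 1), x ^ k

/-- The coefficients of `x * (P' Q - P Q')`, where `geomWeightedMean a n = P / Q`. -/
noncomputable def geomMeanDerivCoeff (s : ℕ) : ℝ :=
  ∑ k ∈ range (n + 1), ∑ j ∈ range (n + 1), if k + j = s then a k * ((k : ℝ) - j) else 0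

lemma continuousOn_geomWeightedMean : ContinuousOn (geomWeightedMean a n) (Ici 0) :=
  ContinuousOn.div (by fun_prop) (by fun_prop) fun x hx =>
    (geom_sum_pos hx n.add_one_ne_zero).ne'

lemma sum_sum_mul_pow_add (g : ℕ → ℕ → ℝ) (x : ℝ) :
    ∑ k ∈ range (n + 1), ∑ j ∈ range (n + 1), g k j * x ^ (k + j) =
      ∑ s ∈ range (2 * n + 1),
        (∑ k ∈ range (n + 1), ∑ j ∈ range (n + 1), if k + j = s then g k j else 0) * x ^ s := by
  rw [eq_comm]
  simp only [sum_mul, ite_mul, zero_mul]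
  rw [sum_comm]
  refine sum_congr rfl fun k hk => ?_
  rw [sum_comm]
  refine sum_congr rfl fun j hj => ?_
  simp only [mem_range] at hk hj
  rw [sum_ite_eq, if_pos (mem_range.2 (by omega))]

lemma geomMeanDerivCoeff_zero : geomMeanDerivCoeff a n 0 = 0 := by
  refine sum_eq_zero fun k _ => sum_eq_zero fun j _ => ?_
  split_ifs with h
  · obtain ⟨rfl, rfl⟩ : k = 0 ∧ j = 0 := by omega
    simp
  · rfl

lemma geomMeanDerivCoeff_two_mul : geomMeanDerivCoeff a n (2 * n) = 0 := by
  refine sum_eq_zero fun k hk => sum_eq_zero fun j hj => ?_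
  simp only [mem_range] at hk hj
  split_ifs with h
  · obtain rfl : k = j := by omega
    simp
  · rfl

lemma two_mul_geomMeanDerivCoeff (s : ℕ) :
    2 * geomMeanDerivCoeff a n s = ∑ k ∈ range (n + 1), ∑ j ∈ range (n + 1),
      if k + j = s then (a k - a j) * ((k : ℝ) - j) else 0 := by
  have hswap : geomMeanDerivCoeff a n s = ∑ k ∈ range (n + 1), ∑ j ∈ range (n + 1),
      if k + j = s then a j * ((j : ℝ) - k) else 0 := by
    rw [geomMeanDerivCoeff, sum_comm]
    simp only [add_comm]
  rw [two_mul]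
  nth_rewrite 2 [hswap]
  rw [geomMeanDerivCoeff, ← sum_add_distrib]
  refine sum_congr rfl fun k _ => ?_
  rw [← sum_add_distrib]
  refine sum_congr rfl fun j _ => ?_
  split_ifs <;> ring

lemma hasDerivAt_sum_mul_pow (b : ℕ → ℝ) (x : ℝ) :
    HasDerivAt (fun y => ∑ k ∈ range (n + 1), b k * y ^ k)
      (∑ k ∈ range (n + 1), b k * (k * x ^ (k - 1))) x :=
  HasDerivAt.fun_sum fun k _ => (hasDerivAt_pow k x).const_mul (b k)

lemma mul_sum_mul_pow_sub_one (b : ℕ → ℝ) (x : ℝ) :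
    x * ∑ k ∈ range (n + 1), b k * (k * x ^ (k - 1)) = ∑ k ∈ range (n + 1), b k * k * x ^ k := by
  rw [mul_sum]
  refine sum_congr rfl fun k _ => ?_
  rcases k with _ | k
  · simp
  · rw [Nat.add_sub_cancel, pow_succ]
    ring

lemma sum_range_geomMeanDerivCoeff_mul_pow (hn : 1 ≤ n) (x : ℝ) :
    ∑ s ∈ range (2 * n + 1), geomMeanDerivCoeff a n s * x ^ s =
      x * ∑ m ∈ range (2 * n - 1), geomMeanDerivCoeff a n (m + 1) * x ^ m := by
  rw [show 2 * n + 1 = 2 * n - 1 + 1 + 1 by omega, sum_range_succ, sum_range_succ',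
    show 2 * n - 1 + 1 = 2 * n by omega, geomMeanDerivCoeff_zero, geomMeanDerivCoeff_two_mul,
    mul_sum]
  simp only [pow_succ, zero_mul, add_zero]
  exact sum_congr rfl fun m _ => by ring

lemma hasDerivAt_geomWeightedMean (hn : 1 ≤ n) {x : ℝ} (hx : 0 < x) :
    HasDerivAt (geomWeightedMean a n)
      ((∑ m ∈ range (2 * n - 1), geomMeanDerivCoeff a n (m + 1) * x ^ m) /
        (∑ k ∈ range (n + 1), x ^ k) ^ 2) x := by
  have hQ' := hasDerivAt_sum_mul_pow n (fun _ => 1) x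
  simp only [one_mul] at hQ'
  have hnum : ∑ m ∈ range (2 * n - 1), geomMeanDerivCoeff a n (m + 1) * x ^ m =
      (∑ k ∈ range (n + 1), a k * (k * x ^ (k - 1))) * ∑ k ∈ range (n + 1), x ^ k -
        (∑ k ∈ range (n + 1), a k * x ^ k) * ∑ k ∈ range (n + 1), k * x ^ (k - 1) := by
    refine mul_left_cancel₀ hx.ne' ?_
    have hxQ' : x * ∑ k ∈ range (n + 1), (k : ℝ) * x ^ (k - 1) =
        ∑ k ∈ range (n + 1), k * x ^ k := by
      simpa using mul_sum_mul_pow_sub_one n (fun _ => 1) x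
    rw [← sum_range_geomMeanDerivCoeff_mul_pow a n hn, mul_sub, ← mul_assoc, mul_left_comm,
      mul_sum_mul_pow_sub_one, hxQ']
    simp only [geomMeanDerivCoeff]
    rw [← sum_sum_mul_pow_add, sum_mul_sum, sum_mul_sum, ← sum_sub_distrib]
    refine sum_congr rfl fun k _ => ?_
    rw [← sum_sub_distrib]
    exact sum_congr rfl fun j _ => by ring
  rw [hnum]
  exact (hasDerivAt_sum_mul_pow n a x).div hQ' (geom_sum_pos hx.le n.add_one_ne_zero).ne'

theorem geomWeightedMean_strictMonoOn_strictAntiOn (hn : 1 ≤ n) {r : ℝ} (hr : 0 < r)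
    (hpos : ∀ x ∈ Set.Ioo 0 r, 0 < ∑ m ∈ range (2 * n - 1), geomMeanDerivCoeff a n (m + 1) * x ^ m)
    (hneg : ∀ x ∈ Ioi r, ∑ m ∈ range (2 * n - 1), geomMeanDerivCoeff a n (m + 1) * x ^ m < 0) :
    StrictMonoOn (geomWeightedMean a n) (Icc 0 r) ∧
      StrictAntiOn (geomWeightedMean a n) (Ici r) := by
  have hQ : ∀ x : ℝ, 0 < x → 0 < (∑ k ∈ range (n + 1), x ^ k) ^ 2 := fun x hx =>
    pow_pos (geom_sum_pos hx.le n.add_one_ne_zero) 2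
  constructor
  · refine strictMonoOn_of_deriv_pos (convex_Icc 0 r)
      ((continuousOn_geomWeightedMean a n).mono Set.Icc_subset_Ici_self) fun x hx => ?_
    rw [interior_Icc] at hx
    rw [(hasDerivAt_geomWeightedMean a n hn hx.1).deriv]
    exact div_pos (hpos x hx) (hQ x hx.1)
  · refine strictAntiOn_of_deriv_neg (convex_Ici r)
      ((continuousOn_geomWeightedMean a n).mono (Set.Ici_subset_Ici.2 hr.le)) fun x hx => ?_
    rw [interior_Ici] at hx
    rw [(hasDerivAt_geomWeightedMean a n hn (hr.trans hx)).deriv]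
    exact div_neg_of_neg_of_pos (hneg x hx) (hQ x (hr.trans hx))

end GeomWeightedMean

lemma concaveOn_mul_div_one_add {a : ℝ} (ha : 0 ≤ a) :
    ConcaveOn ℝ (Ici 0) fun x => a * x / (1 + x) := by
  refine ⟨convex_Ici 0, fun x (hx : 0 ≤ x) y (hy : 0 ≤ y) p q hp hq hpq => ?_⟩
  obtain rfl : q = 1 - p := by linarith
  simp only [smul_eq_mul]
  rw [mul_div_assoc', mul_div_assoc', div_add_div _ _ (by positivity) (by positivity),
    div_le_div_iff₀ (by positivity) (by positivity)]
  nlinarith [mul_nonneg (mul_nonneg (mul_nonneg ha hp) hq) (sq_nonneg (x - y))]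

lemma monotoneOn_mul_div_one_add {a : ℝ} (ha : 0 ≤ a) :
    MonotoneOn (fun x => a * x / (1 + x)) (Ici 0) := by
  intro x (hx : 0 ≤ x) y (hy : 0 ≤ y) hxy
  simp only
  rw [div_le_div_iff₀ (by positivity) (by positivity)]
  nlinarith [mul_nonneg ha (sub_nonneg.2 hxy)]

lemma one_sub_mul_sum_range_natCast_mul_pow (x : ℝ) (n : ℕ) :
    (1 - x) * ∑ k ∈ range (n + 1), (k : ℝ) * x ^ k =
      ∑ k ∈ range (n + 1), x ^ k - 1 - n * x ^ (n + 1) := by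
  induction n with
  | zero => simp
  | succ n ih =>
    rw [sum_range_succ, mul_add, ih, sum_range_succ (fun k => x ^ k) (n + 1)]
    push_cast
    ring

section SocialRate

variable (R C μ : ℝ)

noncomputable def stateRate (k : ℕ) : ℝ := if k = 0 then 0 else R * μ - C * k

lemma sum_range_stateRate_mul_pow (n : ℕ) (x : ℝ) :
    ∑ k ∈ range (n + 1), stateRate R C μ k * x ^ k =
      R * μ * (∑ k ∈ range (n + 1), x ^ k - 1) - C * ∑ k ∈ range (n + 1), (k : ℝ) * x ^ k := by
  simp only [sum_range_succ', stateRate, Nat.add_eq_zero_iff, one_ne_zero, and_false, if_false,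
    if_true, Nat.cast_add, Nat.cast_one, pow_zero, zero_mul, add_zero, add_sub_cancel_right,
    CharP.cast_eq_zero, mul_sum, ← sum_sub_distrib]
  exact sum_congr rfl fun k _ => by ring

lemma socialRate_eq_geomWeightedMean (n : ℕ) {x : ℝ} (hx : 0 ≤ x) :
    socialRate R C μ n x = geomWeightedMean (stateRate R C μ) n x := by
  have hQ := (geom_sum_pos hx n.add_one_ne_zero).ne'
  rw [geomWeightedMean, sum_range_stateRate_mul_pow, eq_div_iff hQ, socialRate]
  split_ifs with h1
  · subst h1
    have hgauss : (∑ k ∈ range (n + 1), (k : ℝ)) * 2 = (n + 1) * n := by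
      rw [← Nat.cast_sum]
      exact_mod_cast sum_range_id_mul_two (n + 1)
    simp only [one_pow, mul_one, sum_const, card_range, nsmul_eq_mul]
    field_simp
    push_cast
    linear_combination C * (n + 1) * hgauss
  · have hx1 : 1 - x ≠ 0 := sub_ne_zero.2 (Ne.symm h1)
    have hgeom := mul_neg_geom_sum x (n + 1)
    have hxn : 1 - x ^ (n + 1) ≠ 0 := by
      rw [← hgeom]
      exact mul_ne_zero hx1 hQ
    have harith := one_sub_mul_sum_range_natCast_mul_pow x n
    field_simp
    linear_combination (C * (1 + n * x ^ (n + 1)) - R * μ * (1 - x)) * hgeom +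
      C * (1 - x ^ (n + 1)) * harith

lemma socialRate_one_eqOn :
    Set.EqOn (fun x => (R * μ - C) * x / (1 + x)) (socialRate R C μ 1) (Ici 0) := fun x hx => by
  rw [socialRate_eq_geomWeightedMean R C μ 1 hx, geomWeightedMean]
  simp [sum_range_succ, stateRate]

-- `t` is kept apart from `s` so that the identity can be proved by induction on `s`.
lemma sum_range_stateRate_mul (s : ℕ) (t : ℝ) :
    ∑ k ∈ range (s + 1), stateRate R C μ k * (2 * k - t) =
      R * μ * s * (s + 1 - t) - C * s * (s + 1) * (4 * s + 2 - 3 * t) / 6 := by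
  induction s with
  | zero => simp [stateRate]
  | succ s ih =>
    rw [sum_range_succ, ih, stateRate, if_neg (Nat.succ_ne_zero s)]
    push_cast
    ring

lemma geomMeanDerivCoeff_stateRate_of_le {n s : ℕ} (hs : s ≤ n) :
    geomMeanDerivCoeff (stateRate R C μ) n s = s * (R * μ - C * (s + 1) * (s + 2) / 6) := by
  have hinner : ∀ k ∈ range (n + 1), (∑ j ∈ range (n + 1),
      if k + j = s then stateRate R C μ k * ((k : ℝ) - j) else 0) =
      if k ≤ s then stateRate R C μ k * (2 * k - s) else 0 := by
    intro k _
    split_ifs with hks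
    · rw [sum_eq_single (s - k) (fun j _ hj => if_neg (by omega))
        (fun h => absurd (mem_range.2 (by omega)) h), if_pos (by omega), Nat.cast_sub hks]
      ring
    · exact sum_eq_zero fun j _ => if_neg (by omega)
  rw [geomMeanDerivCoeff, sum_congr rfl hinner, ← sum_filter,
    show (range (n + 1)).filter (· ≤ s) = range (s + 1) by ext; simp; omega,
    sum_range_stateRate_mul]
  ring

lemma two_mul_geomMeanDerivCoeff_stateRate_of_lt {n s : ℕ} (hs : n < s) :
    2 * geomMeanDerivCoeff (stateRate R C μ) n s = -C * ∑ k ∈ range (n + 1),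
      ∑ j ∈ range (n + 1), if k + j = s then ((k : ℝ) - j) ^ 2 else 0 := by
  rw [two_mul_geomMeanDerivCoeff, mul_sum]
  refine sum_congr rfl fun k hk => ?_
  rw [mul_sum]
  refine sum_congr rfl fun j hj => ?_
  simp only [mem_range] at hk hj
  split_ifs with h
  · rw [stateRate, stateRate, if_neg (by omega), if_neg (by omega)]
    ring
  · ring

variable {R C μ}

lemma geomMeanDerivCoeff_stateRate_nonpos_of_lt (hC : 0 < C) {n s : ℕ} (hs : n < s) :
    geomMeanDerivCoeff (stateRate R C μ) n s ≤ 0 := by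
  have h := two_mul_geomMeanDerivCoeff_stateRate_of_lt R C μ hs
  have : 0 ≤ ∑ k ∈ range (n + 1), ∑ j ∈ range (n + 1),
      if k + j = s then ((k : ℝ) - j) ^ 2 else 0 :=
    sum_nonneg fun k _ => sum_nonneg fun j _ => by split_ifs <;> positivity
  nlinarith

lemma geomMeanDerivCoeff_stateRate_two_mul_sub_one_neg (hC : 0 < C) {n : ℕ} (hn : 2 ≤ n) :
    geomMeanDerivCoeff (stateRate R C μ) n (2 * n - 1) < 0 := by
  have h := two_mul_geomMeanDerivCoeff_stateRate_of_lt R C μ (n := n) (s := 2 * n - 1) (by omega)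
  have hterm : ∀ k ∈ range (n + 1), ∀ j ∈ range (n + 1),
      0 ≤ if k + j = 2 * n - 1 then ((k : ℝ) - j) ^ 2 else 0 := fun k _ j _ => by
    split_ifs <;> positivity
  have : 1 ≤ ∑ k ∈ range (n + 1), ∑ j ∈ range (n + 1),
      if k + j = 2 * n - 1 then ((k : ℝ) - j) ^ 2 else 0 := by
    refine le_trans ?_ (single_le_sum (fun k hk => sum_nonneg (hterm k hk))
      (mem_range.2 n.lt_succ_self))
    refine le_trans ?_ (single_le_sum (hterm n (mem_range.2 n.lt_succ_self)) (a := n - 1)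
      (mem_range.2 (by omega)))
    rw [if_pos (by omega), Nat.cast_sub (by omega)]
    simp
  nlinarith

lemma geomMeanDerivCoeff_stateRate_nonpos_of_neg (hC : 0 < C) {n i j : ℕ} (hij : i ≤ j)
    (hi : geomMeanDerivCoeff (stateRate R C μ) n i < 0) :
    geomMeanDerivCoeff (stateRate R C μ) n j ≤ 0 := by
  rcases le_or_gt j n with hj | hj
  · rw [geomMeanDerivCoeff_stateRate_of_le R C μ (hij.trans hj)] at hi
    rw [geomMeanDerivCoeff_stateRate_of_le R C μ hj]
    have hi' := neg_of_mul_neg_right hi (by positivity)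
    have hmono : ((i : ℝ) + 1) * (i + 2) ≤ (j + 1) * (j + 2) := by gcongr
    refine mul_nonpos_of_nonneg_of_nonpos (by positivity) ?_
    nlinarith [mul_le_mul_of_nonneg_left hmono hC.le]
  · exact geomMeanDerivCoeff_stateRate_nonpos_of_lt hC hj

theorem socialRate_unimodal (hC : 0 < C) (hRC : C < R * μ) {n : ℕ} (hn : 2 ≤ n) :
    ∃ r > 0, StrictMonoOn (socialRate R C μ n) (Icc 0 r) ∧
      StrictAntiOn (socialRate R C μ n) (Ici r) := by
  have h1 : 0 < geomMeanDerivCoeff (stateRate R C μ) n 1 := by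
    rw [geomMeanDerivCoeff_stateRate_of_le R C μ (by omega)]
    norm_num
    linarith
  have htop := geomMeanDerivCoeff_stateRate_two_mul_sub_one_neg (R := R) (μ := μ) hC hn
  rw [show 2 * n - 1 = 2 * n - 2 + 1 by omega] at htop
  obtain ⟨r, hr, hpos, hneg⟩ := exists_sign_change_of_coeff_sign_change
    (fun m => geomMeanDerivCoeff (stateRate R C μ) n (m + 1)) h1 htop
    fun i j hij => geomMeanDerivCoeff_stateRate_nonpos_of_neg hC (by omega)
  rw [show 2 * n - 2 + 1 = 2 * n - 1 by omega] at hpos hneg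
  obtain ⟨hmono, hanti⟩ :=
    geomWeightedMean_strictMonoOn_strictAntiOn _ n (by omega) hr hpos hneg
  have heq : Set.EqOn (geomWeightedMean (stateRate R C μ) n) (socialRate R C μ n) (Ici 0) :=
    fun x hx => (socialRate_eq_geomWeightedMean R C μ n hx).symm
  exact ⟨r, hr, hmono.congr (heq.mono Set.Icc_subset_Ici_self),
    hanti.congr (heq.mono (Set.Ici_subset_Ici.2 hr.le))⟩

end SocialRate

theorem stmt3_general (R C μ : ℝ) (hC : 0 < C)
    (n : ℕ) (hn : 1 ≤ n) (hRC : (n : ℝ) + 1 ≤ R * μ / C) :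
    (ConcaveOn ℝ (Set.Ici (0 : ℝ)) (socialRate R C μ n) ∧
      MonotoneOn (socialRate R C μ n) (Set.Ici (0 : ℝ))) ∨
    (∃ ρstar : ℝ, 0 < ρstar ∧
      StrictMonoOn (socialRate R C μ n) (Set.Icc (0 : ℝ) ρstar) ∧
      StrictAntiOn (socialRate R C μ n) (Set.Ici ρstar)) := by
  have hRC' : ((n : ℝ) + 1) * C ≤ R * μ := (le_div_iff₀ hC).1 hRC
  obtain rfl | hn2 := hn.eq_or_lt
  · have ha : 0 ≤ R * μ - C := by norm_num at hRC'; linarith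
    exact Or.inl ⟨(concaveOn_mul_div_one_add ha).congr (socialRate_one_eqOn R C μ),
      (monotoneOn_mul_div_one_add ha).congr (socialRate_one_eqOn R C μ)⟩
  · have : (2 : ℝ) ≤ n := by exact_mod_cast hn2
    exact Or.inr (socialRate_unimodal hC (by nlinarith) hn2)

theorem stmt3 (R C μ : ℝ) (hR : 0 < R) (hC : 0 < C) (hμ : 0 < μ)
    (n : ℕ) (hn : 1 ≤ n) (hRC : (n : ℝ) + 1 ≤ R * μ / C) :
    (ConcaveOn ℝ (Set.Ici (0 : ℝ)) (socialRate R C μ n) ∧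
      MonotoneOn (socialRate R C μ n) (Set.Ici (0 : ℝ))) ∨
    (∃ ρstar : ℝ, 0 < ρstar ∧
      StrictMonoOn (socialRate R C μ n) (Set.Icc (0 : ℝ) ρstar) ∧
      StrictAntiOn (socialRate R C μ n) (Set.Ici ρstar)) :=
  stmt3_general R C μ hC n hn hRC
end

section
/- Let R, C, μ > 0 and let n ≥ 1 be an integer with Rμ ≥ Cn. Then the revenue rate function r_n is concave on [0, ∞). -/
open Polynomial Finset Set

/-- The geometric-sum polynomial `1 + X + ... + X^n`. -/
noncomputable def naorP (n : ℕ) : Polynomial ℝ := ∑ i ∈ Finset.range (n + 1), Polynomial.X ^ i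

lemma naorP_eval (n : ℕ) (x : ℝ) : (naorP n).eval x = ∑ i ∈ Finset.range (n + 1), x ^ i := by
  simp [naorP]

lemma naorP_pos (n : ℕ) {x : ℝ} (hx : 0 ≤ x) : 0 < (naorP n).eval x := by
  rw [naorP_eval]
  have h := Finset.single_le_sum (f := fun i => x ^ i) (fun i _ => pow_nonneg hx i)
    (Finset.mem_range.2 (Nat.succ_pos n))
  calc (0:ℝ) < 1 := one_pos
    _ = x ^ 0 := (pow_zero x).symm
    _ ≤ _ := h

lemma derivs_eq {F G F' G' : ℝ → ℝ} (h : ∀ x, F x = G x)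
    (hF : ∀ x, HasDerivAt F (F' x) x) (hG : ∀ x, HasDerivAt G (G' x) x) :
    ∀ x, F' x = G' x := by
  have hFG : F = G := funext h
  subst hFG
  exact fun x => (hF x).unique (hG x)

lemma naorE1 (n : ℕ) (x : ℝ) : (naorP n).eval x * (x - 1) = x ^ (n + 1) - 1 := by
  rw [naorP_eval]; exact geom_sum_mul x (n + 1)

lemma naorE2 (n : ℕ) (x : ℝ) :
    (naorP n).derivative.eval x * (x - 1) + (naorP n).eval x = ((n : ℝ) + 1) * x ^ n := by
  have h := derivs_eq (F := fun x => (naorP n).eval x * (x - 1))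
    (G := fun x => x ^ (n + 1) - 1)
    (F' := fun x => (naorP n).derivative.eval x * (x - 1) + (naorP n).eval x * 1)
    (G' := fun x => (((n : ℕ) + 1 : ℕ) : ℝ) * x ^ (n + 1 - 1))
    (naorE1 n)
    (fun x => ((naorP n).hasDerivAt x).mul ((hasDerivAt_id x).sub_const 1))
    (fun x => (hasDerivAt_pow (n + 1) x).sub_const 1) x
  simp only [Nat.add_sub_cancel, Nat.cast_add, Nat.cast_one, mul_one] at h
  linarith [h]

lemma naorE3 (n : ℕ) (x : ℝ) :
    (naorP n).derivative.derivative.eval x * (x - 1) + 2 * (naorP n).derivative.eval x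
      = ((n : ℝ) + 1) * ((n : ℝ) * x ^ (n - 1)) := by
  have h := derivs_eq
    (F := fun x => (naorP n).derivative.eval x * (x - 1) + (naorP n).eval x)
    (G := fun x => ((n : ℝ) + 1) * x ^ n)
    (F' := fun x => ((naorP n).derivative.derivative.eval x * (x - 1)
      + (naorP n).derivative.eval x * 1) + (naorP n).derivative.eval x)
    (G' := fun x => ((n : ℝ) + 1) * ((n : ℕ) * x ^ (n - 1)))
    (naorE2 n)
    (fun x => (((naorP n).derivative.hasDerivAt x).mul
      ((hasDerivAt_id x).sub_const 1)).add ((naorP n).hasDerivAt x))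
    (fun x => (hasDerivAt_pow n x).const_mul ((n : ℝ) + 1)) x
  simp only [mul_one] at h
  linarith [h]

lemma naorE4 (n : ℕ) (hn : 1 ≤ n) :
    3 * (naorP n).derivative.derivative.eval 1 = ((n : ℝ) + 1) * ((n : ℝ) * ((n : ℝ) - 1)) := by
  have h := derivs_eq
    (F := fun x => (naorP n).derivative.derivative.eval x * (x - 1)
      + 2 * (naorP n).derivative.eval x)
    (G := fun x => ((n : ℝ) + 1) * ((n : ℝ) * x ^ (n - 1)))
    (F' := fun x => (((naorP n).derivative.derivative.derivative.eval x * (x - 1)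
      + (naorP n).derivative.derivative.eval x * 1)) + 2 * (naorP n).derivative.derivative.eval x)
    (G' := fun x => ((n : ℝ) + 1) * ((n : ℝ) * (((n - 1 : ℕ) : ℝ) * x ^ (n - 1 - 1))))
    (naorE3 n)
    (fun x => ((((naorP n).derivative.derivative.hasDerivAt x).mul
      ((hasDerivAt_id x).sub_const 1)).add
      (((naorP n).derivative.hasDerivAt x).const_mul 2)))
    (fun x => ((hasDerivAt_pow (n - 1) x).const_mul (n : ℝ)).const_mul ((n : ℝ) + 1)) 1
  have hc : ((n - 1 : ℕ) : ℝ) = (n : ℝ) - 1 := by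
    rw [Nat.cast_sub hn]; simp
  simp only [mul_one, one_pow, sub_self, mul_zero, zero_add, hc] at h
  linarith [h]

lemma naor_key (n : ℕ) (hn : 1 ≤ n) {x : ℝ} (hx : 0 ≤ x) :
    (naorP n).eval x * (naorP n).derivative.derivative.eval x
      ≤ 2 * ((naorP n).derivative.eval x) ^ 2 := by
  set u := (naorP n).eval x with hu_def
  set v := (naorP n).derivative.eval x with hv_def
  set w := (naorP n).derivative.derivative.eval x with hw_def
  have hn' : (1 : ℝ) ≤ (n : ℝ) := by exact_mod_cast hn
  by_cases hx1 : x = 1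
  · subst hx1
    have h2 := naorE2 n 1
    have h3 := naorE3 n 1
    have h4 := naorE4 n hn
    simp only [sub_self, mul_zero, zero_add, one_pow, mul_one] at h2 h3 h4
    have hu : u = (n : ℝ) + 1 := by linarith
    have hv : v = ((n : ℝ) + 1) * (n : ℝ) / 2 := by linarith
    have hw : w = ((n : ℝ) + 1) * ((n : ℝ) * ((n : ℝ) - 1)) / 3 := by linarith
    rw [hu, hv, hw]
    nlinarith [hn', sq_nonneg ((n : ℝ) + 1), mul_nonneg (by linarith : (0:ℝ) ≤ (n:ℝ))
      (by linarith : (0:ℝ) ≤ (n:ℝ)), sq_nonneg ((n:ℝ) * ((n:ℝ)+1))]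
  · have hy : x - 1 ≠ 0 := sub_ne_zero.2 hx1
    have hu : u = (x ^ (n + 1) - 1) / (x - 1) := by
      rw [eq_div_iff hy]; exact naorE1 n x
    have hv : v = (((n : ℝ) + 1) * x ^ n - u) / (x - 1) := by
      rw [eq_div_iff hy]; linarith [naorE2 n x]
    have hw : w = (((n : ℝ) + 1) * ((n : ℝ) * x ^ (n - 1)) - 2 * v) / (x - 1) := by
      rw [eq_div_iff hy]; linarith [naorE3 n x]
    have hxn : x ^ n = x * x ^ (n - 1) := by
      conv_lhs => rw [show n = (n - 1) + 1 by omega]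
      rw [pow_succ]; ring
    have hxn1 : x ^ (n + 1) = x ^ 2 * x ^ (n - 1) := by
      rw [show n + 1 = (n - 1) + 2 by omega, pow_add]; ring
    have hxn2 : x ^ (n + 2) = x ^ 3 * x ^ (n - 1) := by
      rw [show n + 2 = (n - 1) + 3 by omega, pow_add]; ring
    -- the sum E and its closed form
    have hterm : ∀ k ∈ Finset.range n,
        (x ^ (k + 1) - 1) * (x ^ (n - k) - 1) = x ^ (n + 1) - x ^ (k + 1) - x ^ (n - k) + 1 := by
      intro k hk
      have hk' : k < n := Finset.mem_range.1 hk
      have hpow : x ^ (k + 1) * x ^ (n - k) = x ^ (n + 1) := by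
        rw [← pow_add]; congr 1; omega
      linear_combination hpow
    have hreflect : ∑ k ∈ Finset.range n, x ^ (n - k) = ∑ k ∈ Finset.range n, x ^ (k + 1) := by
      rw [← Finset.sum_range_reflect (fun j => x ^ (j + 1)) n]
      apply Finset.sum_congr rfl
      intro k hk
      have hk' : k < n := Finset.mem_range.1 hk
      congr 1; omega
    have hshift : ∑ k ∈ Finset.range n, x ^ (k + 1) = (∑ k ∈ Finset.range n, x ^ k) * x := by
      rw [Finset.sum_mul]
      exact Finset.sum_congr rfl fun k _ => (pow_succ x k)
    have hsum : ∑ k ∈ Finset.range n, (x ^ (k + 1) - 1) * (x ^ (n - k) - 1)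
        = (n : ℝ) * x ^ (n + 1) - 2 * ((∑ k ∈ Finset.range n, x ^ k) * x) + n := by
      rw [Finset.sum_congr rfl hterm]
      rw [Finset.sum_add_distrib, Finset.sum_sub_distrib, Finset.sum_sub_distrib,
        Finset.sum_const, Finset.card_range, hreflect, hshift, Finset.sum_const,
        Finset.card_range, nsmul_eq_mul, nsmul_eq_mul]
      ring
    have hgs : (∑ k ∈ Finset.range n, x ^ k) * (x - 1) = x ^ n - 1 := geom_sum_mul x n
    have hE : (x - 1) * ∑ k ∈ Finset.range n, (x ^ (k + 1) - 1) * (x ^ (n - k) - 1)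
        = (n : ℝ) * x ^ (n + 2) - ((n : ℝ) + 2) * x ^ (n + 1) + ((n : ℝ) + 2) * x - n := by
      rw [hsum]
      have h2 : x ^ (n + 2) = x ^ (n+1) * x := by rw [pow_succ]
      have h1 : x ^ (n + 1) = x ^ n * x := by rw [pow_succ]
      linear_combination (-2 : ℝ) * x * hgs + ((n:ℝ) * x - (n:ℝ)) * h2
        + ((- (n:ℝ) - 2) + 2 * x) * h1 - ((n:ℝ) + 2) * x * h1 + ((n:ℝ) + 2) * x * h1
    have hEnonneg : 0 ≤ ∑ k ∈ Finset.range n, (x ^ (k + 1) - 1) * (x ^ (n - k) - 1) := by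
      apply Finset.sum_nonneg
      intro k _
      rcases le_total x 1 with h | h
      · have h1 : x ^ (k + 1) - 1 ≤ 0 := sub_nonpos.2 (pow_le_one₀ hx h)
        have h2 : x ^ (n - k) - 1 ≤ 0 := sub_nonpos.2 (pow_le_one₀ hx h)
        have := mul_nonneg (neg_nonneg.2 h1) (neg_nonneg.2 h2)
        rwa [neg_mul_neg] at this
      · exact mul_nonneg (sub_nonneg.2 (one_le_pow₀ h)) (sub_nonneg.2 (one_le_pow₀ h))
    have key4 : (2 * v ^ 2 - u * w) * (x - 1) ^ 4
        = ((n : ℝ) + 1) * x ^ (n - 1) * (x - 1)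
          * ((n : ℝ) * x ^ (n + 2) - ((n : ℝ) + 2) * x ^ (n + 1) + ((n : ℝ) + 2) * x - n) := by
      rw [hw, hv, hu, hxn, hxn1, hxn2]
      field_simp
      ring
    have key2 : (2 * v ^ 2 - u * w) * (x - 1) ^ 4
        = ((n : ℝ) + 1) * x ^ (n - 1) * (x - 1) ^ 2
          * ∑ k ∈ Finset.range n, (x ^ (k + 1) - 1) * (x ^ (n - k) - 1) := by
      rw [key4]
      linear_combination (-((n : ℝ) + 1)) * x ^ (n - 1) * (x - 1) * hE
    have h4pos : (0 : ℝ) < (x - 1) ^ 4 := by positivity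
    have hrhs : 0 ≤ ((n : ℝ) + 1) * x ^ (n - 1) * (x - 1) ^ 2
        * ∑ k ∈ Finset.range n, (x ^ (k + 1) - 1) * (x ^ (n - k) - 1) := by
      apply mul_nonneg _ hEnonneg
      positivity
    nlinarith [key2, h4pos, hrhs]

lemma naor_convex (n : ℕ) (hn : 1 ≤ n) :
    ConvexOn ℝ (Set.Ici (0 : ℝ)) (fun x => ((naorP n).eval x)⁻¹) := by
  have hcont : ContinuousOn (fun x => ((naorP n).eval x)⁻¹) (Set.Ici (0:ℝ)) := fun x hx =>
    (((naorP n).continuousAt).inv₀ (naorP_pos n hx).ne').continuousWithinAt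
  have hderiv : ∀ x : ℝ, (naorP n).eval x ≠ 0 →
      HasDerivAt (fun y => ((naorP n).eval y)⁻¹)
        (-(naorP n).derivative.eval x / ((naorP n).eval x) ^ 2) x :=
    fun x hx => ((naorP n).hasDerivAt x).inv hx
  have hdiff : DifferentiableOn ℝ (fun x => ((naorP n).eval x)⁻¹)
      (interior (Set.Ici (0:ℝ))) := by
    rw [interior_Ici]
    intro x hx
    exact (hderiv x (naorP_pos n hx.le).ne').differentiableAt.differentiableWithinAt
  have hev : ∀ x : ℝ, (naorP n).eval x ≠ 0 →
      deriv (fun y => ((naorP n).eval y)⁻¹)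
        =ᶠ[nhds x] fun y => -(naorP n).derivative.eval y / ((naorP n).eval y) ^ 2 := by
    intro x hx
    have hne : ∀ᶠ y in nhds x, (naorP n).eval y ≠ 0 :=
      ((naorP n).continuousAt).eventually_ne hx
    exact hne.mono fun y hy => (hderiv y hy).deriv
  have hφ : ∀ x : ℝ, (naorP n).eval x ≠ 0 →
      HasDerivAt (fun y => -(naorP n).derivative.eval y / ((naorP n).eval y) ^ 2)
        ((-(naorP n).derivative.derivative.eval x * ((naorP n).eval x) ^ 2
          - (-(naorP n).derivative.eval x)
            * ((2 : ℕ) * (naorP n).eval x ^ (2 - 1) * (naorP n).derivative.eval x))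
          / (((naorP n).eval x) ^ 2) ^ 2) x := by
    intro x hx
    exact (((naorP n).derivative.hasDerivAt x).neg).div
      (((naorP n).hasDerivAt x).pow 2) (pow_ne_zero 2 hx)
  apply convexOn_of_deriv2_nonneg (convex_Ici 0) hcont hdiff
  · rw [interior_Ici]
    intro x hx
    have hne := (naorP_pos n hx.le).ne'
    exact (((hev x hne).differentiableAt_iff).2 (hφ x hne).differentiableAt).differentiableWithinAt
  · rw [interior_Ici]
    intro x hx
    have hne := (naorP_pos n hx.le).ne'
    have hup : 0 < (naorP n).eval x := naorP_pos n hx.le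
    have hit : deriv^[2] (fun y => ((naorP n).eval y)⁻¹) x
        = deriv (deriv (fun y => ((naorP n).eval y)⁻¹)) x := by
      simp [Function.iterate_succ, Function.iterate_zero, Function.comp]
    rw [hit, (hev x hne).deriv_eq, (hφ x hne).deriv]
    have hkey := naor_key n hn hx.le
    set u := (naorP n).eval x
    set v := (naorP n).derivative.eval x
    set w := (naorP n).derivative.derivative.eval x
    have heq : (-w * u ^ 2 - (-v) * ((2 : ℕ) * u ^ (2 - 1) * v)) / (u ^ 2) ^ 2
        = (2 * v ^ 2 - u * w) * u / u ^ 4 := by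
      field_simp
      ring
    rw [heq]
    apply div_nonneg (mul_nonneg (by linarith) hup.le) (by positivity)

lemma concaveOn_congr' {s : Set ℝ} {f g : ℝ → ℝ} (hf : ConcaveOn ℝ s f)
    (h : ∀ x ∈ s, f x = g x) : ConcaveOn ℝ s g := by
  refine ⟨hf.1, fun x hx y hy a b ha hb hab => ?_⟩
  rw [← h _ hx, ← h _ hy, ← h _ (hf.1 hx hy ha hb hab)]
  exact hf.2 hx hy ha hb hab

/-- The revenue rate function `r_n` of Naor's observable M/M/1 queue. -/
noncomputable def revenueRate (R C μ : ℝ) (n : ℕ) (ρ : ℝ) : ℝ :=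
  if ρ = 1 then (R * μ - C * (n : ℝ)) * ((n : ℝ) / ((n : ℝ) + 1))
  else (R * μ - C * (n : ℝ)) * (ρ * (1 - ρ ^ n) / (1 - ρ ^ (n + 1)))

/-- The revenue rate function is concave on `[0, ∞)`. -/
theorem stmt9 (R C μ : ℝ) (hR : 0 < R) (hC : 0 < C) (hμ : 0 < μ)
    (n : ℕ) (hn : 1 ≤ n) (hRC : C * (n : ℝ) ≤ R * μ) :
    ConcaveOn ℝ (Set.Ici (0 : ℝ)) (revenueRate R C μ n) := by
  set K := R * μ - C * (n : ℝ) with hK_def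
  have hK : 0 ≤ K := by simp [hK_def]; linarith
  have hconv := naor_convex n hn
  have h1 : ConcaveOn ℝ (Set.Ici (0 : ℝ))
      ((-fun x => K • ((naorP n).eval x)⁻¹) + fun _ => K) :=
    ((hconv.smul hK).neg).add_const K
  apply concaveOn_congr' h1
  intro ρ hρ
  have hρ0 : (0:ℝ) ≤ ρ := hρ
  have hup : 0 < (naorP n).eval ρ := naorP_pos n hρ0
  simp only [Pi.add_apply, Pi.neg_apply, smul_eq_mul]
  unfold revenueRate
  by_cases hρ1 : ρ = 1
  · subst hρ1
    rw [if_pos rfl]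
    have heval : (naorP n).eval 1 = (n : ℝ) + 1 := by
      rw [naorP_eval]; simp [Finset.sum_const, Finset.card_range]
    rw [heval]
    have hpos : (0:ℝ) < (n : ℝ) + 1 := by positivity
    field_simp
    rw [hK_def]
    ring
  · rw [if_neg hρ1]
    have h1' := naorE1 n ρ
    have hden : 1 - ρ ^ (n + 1) ≠ 0 := by
      intro h
      apply hρ1
      have h2 : (naorP n).eval ρ * (ρ - 1) = 0 := by rw [h1']; linarith
      rcases mul_eq_zero.1 h2 with h3 | h3
      · exact absurd h3 hup.ne'
      · linarith
    have hinv : (1 : ℝ) - ((naorP n).eval ρ)⁻¹ = ρ * (1 - ρ ^ n) / (1 - ρ ^ (n + 1)) := by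
      rw [eq_div_iff hden]
      field_simp
      ring_nf
      linear_combination -h1'
    calc -(K * ((naorP n).eval ρ)⁻¹) + K = K * (1 - ((naorP n).eval ρ)⁻¹) := by ring
      _ = K * (ρ * (1 - ρ ^ n) / (1 - ρ ^ (n + 1))) := by rw [hinv]
end

section
/- Let R, C, μ > 0, let n ≥ 1 be an integer with Rμ ≥ Cn, let 0 ≤ a < m < b, and let 0 < d < 2(m−a)(b−m)/(b−a). Then inf_{P ∈ 𝒫(a,b,m,d)} ∫ r_n(ρ) dP(ρ) = (d/(2(m−a)))·r_n(a) + (1 − d/(2(m−a)) − d/(2(b−m)))·r_n(m) + (d/(2(b−m)))·r_n(b). -/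
/-!
On `[0, ∞)` one has `r_n = (Rμ - Cn) (1 - 1 / S_n)` with `S_n = 1 + ρ + ⋯ + ρ^n`, and
`1 / S_n` is convex there because `2 S_n'^2 - S_n S_n''` is a polynomial with nonnegative
coefficients: for `n ≥ 1` it equals `(n + 1) ρ^(n-1) ∑_{j+k=n-1} S_j S_k`. Hence `r_n` is concave.

For a concave `f` on `[a, b]`, the piecewise linear interpolant of `f` at `a, m, b` lies below `f`.
It is an affine function of `ρ` and `|ρ - m|`, so its expectation is the same for every measure in
the MAD set; the member of the MAD set supported on `{a, m, b}`, where the interpolant agrees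
with `f`, attains it.
-/

open MeasureTheory

/-- The MAD ambiguity set: Borel probability measures supported on `[a,b]`
with mean `m` and mean-absolute deviation `d`. -/
def MADSet (a b m d : ℝ) : Set (Measure ℝ) :=
  {P | IsProbabilityMeasure P ∧ P (Set.Icc a b)ᶜ = 0 ∧
    (∫ ρ, ρ ∂P) = m ∧ (∫ ρ, |ρ - m| ∂P) = d}

open Set

section GeomSum
open Polynomial

noncomputable def geomSumPoly (n : ℕ) : ℝ[X] := ∑ k ∈ Finset.range (n + 1), X ^ k

lemma X_sub_one_mul_geomSumPoly (n : ℕ) : (X - 1) * geomSumPoly n = X ^ (n + 1) - 1 := by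
  rw [mul_comm]; exact geom_sum_mul X (n + 1)

lemma X_sub_one_mul_derivative_geomSumPoly (n : ℕ) :
    (X - 1) * derivative (geomSumPoly n) + geomSumPoly n = ((n : ℝ[X]) + 1) * X ^ n := by
  simpa [derivative_mul, add_comm] using congrArg derivative (X_sub_one_mul_geomSumPoly n)

lemma X_sub_one_mul_derivative_derivative_geomSumPoly (n : ℕ) :
    (X - 1) * derivative (derivative (geomSumPoly n)) + 2 * derivative (geomSumPoly n) =
      ((n : ℝ[X]) + 1) * (n : ℝ[X]) * X ^ (n - 1) := by
  have := congrArg derivative (X_sub_one_mul_derivative_geomSumPoly n)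
  simp only [derivative_mul, derivative_add, derivative_sub, derivative_X, derivative_one,
    derivative_natCast, derivative_X_pow, C_eq_natCast] at this
  linear_combination this

lemma sum_geomSumPoly_mul_X_sub_one_sq (n : ℕ) :
    (∑ k ∈ Finset.range (n + 1), geomSumPoly k * geomSumPoly (n - k)) * (X - 1) ^ 2 =
      ((n : ℝ[X]) + 1) * (X ^ (n + 2) + 1) - 2 * X * geomSumPoly n := by
  have hterm : ∀ k ∈ Finset.range (n + 1), geomSumPoly k * geomSumPoly (n - k) * (X - 1) ^ 2 =
      X ^ (n + 2) + 1 - X ^ (k + 1) - X ^ (n - k + 1) := by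
    intro k hk
    have hpow : X ^ (k + 1) * X ^ (n - k + 1) = (X ^ (n + 2) : ℝ[X]) := by
      rw [← pow_add]; congr 1; have := Finset.mem_range.mp hk; omega
    calc _ = ((X - 1) * geomSumPoly k) * ((X - 1) * geomSumPoly (n - k)) := by ring
      _ = (X ^ (k + 1) - 1) * (X ^ (n - k + 1) - 1) := by
        rw [X_sub_one_mul_geomSumPoly, X_sub_one_mul_geomSumPoly]
      _ = _ := by linear_combination hpow
  have hreflect : ∑ k ∈ Finset.range (n + 1), (X : ℝ[X]) ^ (n - k + 1) =
      ∑ k ∈ Finset.range (n + 1), X ^ (k + 1) :=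
    Finset.sum_range_reflect (fun k => (X : ℝ[X]) ^ (k + 1)) (n + 1)
  have hshift : ∑ k ∈ Finset.range (n + 1), (X : ℝ[X]) ^ (k + 1) = X * geomSumPoly n := by
    simp only [geomSumPoly, Finset.mul_sum, pow_succ']
  rw [Finset.sum_mul, Finset.sum_congr rfl hterm]
  simp only [Finset.sum_sub_distrib, Finset.sum_add_distrib, hreflect, hshift, Finset.sum_const,
    Finset.card_range, nsmul_eq_mul]
  push_cast; ring

lemma two_mul_derivative_geomSumPoly_sq_sub (n : ℕ) :
    2 * derivative (geomSumPoly (n + 1)) ^ 2 -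
      geomSumPoly (n + 1) * derivative (derivative (geomSumPoly (n + 1))) =
      ((n : ℝ[X]) + 2) * X ^ n *
        ∑ k ∈ Finset.range (n + 1), geomSumPoly k * geomSumPoly (n - k) := by
  have h0 := X_sub_one_mul_geomSumPoly (n + 1)
  have h1 := X_sub_one_mul_derivative_geomSumPoly (n + 1)
  have h2 := X_sub_one_mul_derivative_derivative_geomSumPoly (n + 1)
  have hQ := sum_geomSumPoly_mul_X_sub_one_sq n
  have hG := X_sub_one_mul_geomSumPoly n
  simp only [add_tsub_cancel_right, Nat.cast_add, Nat.cast_one] at h1 h2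
  have hne : (X * (X - 1) ^ 3 : ℝ[X]) ≠ 0 :=
    mul_ne_zero X_ne_zero (pow_ne_zero _ (X_sub_C_ne_zero 1))
  -- Multiplied by `X (X - 1)^3`, both sides become combinations of the closed forms above.
  refine mul_left_cancel₀ hne ?_
  set S := geomSumPoly (n + 1)
  set D := derivative S
  set N : ℝ[X] := (n : ℝ[X]) + 1
  set y : ℝ[X] := X ^ (n + 1)
  linear_combination (-(2 * (N + 1) * X * y) - N * (N + 1) * (X - 1) * y) * h0
      + (2 * X * (X - 1) * ((X - 1) * D + (N + 1) * y)) * h1 + (-((X - 1) ^ 2 * S * X)) * h2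
      - X * (X - 1) * (N + 1) * X ^ n * hQ + 2 * X * (N + 1) * y * hG

lemma one_le_eval_geomSumPoly (n : ℕ) {x : ℝ} (hx : 0 ≤ x) :
    1 ≤ (geomSumPoly n).eval x := by
  rw [geomSumPoly, eval_finsetSum, Finset.sum_range_succ']
  simp only [eval_pow, eval_X, pow_zero, eval_one]
  linarith [Finset.sum_nonneg fun k (_ : k ∈ Finset.range n) => pow_nonneg hx (k + 1)]

lemma eval_geomSumPoly_pos (n : ℕ) {x : ℝ} (hx : 0 ≤ x) : 0 < (geomSumPoly n).eval x :=
  one_pos.trans_le (one_le_eval_geomSumPoly n hx)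

lemma two_mul_eval_derivative_sq_sub_nonneg (n : ℕ) {x : ℝ} (hx : 0 ≤ x) :
    0 ≤ 2 * (derivative (geomSumPoly n)).eval x ^ 2 -
      (geomSumPoly n).eval x * (derivative (derivative (geomSumPoly n))).eval x := by
  cases n with
  | zero => simp [geomSumPoly]
  | succ n =>
    have h := congrArg (eval x) (two_mul_derivative_geomSumPoly_sq_sub n)
    simp only [eval_sub, eval_mul, eval_pow, eval_ofNat, eval_add, eval_natCast, eval_X,
      eval_finsetSum] at h
    rw [h]
    exact mul_nonneg (by positivity) (Finset.sum_nonneg fun k _ =>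
      mul_nonneg (eval_geomSumPoly_pos k hx).le (eval_geomSumPoly_pos (n - k) hx).le)

lemma convexOn_inv_eval_geomSumPoly (n : ℕ) :
    ConvexOn ℝ (Ici 0) fun x => ((geomSumPoly n).eval x)⁻¹ := by
  set S := geomSumPoly n
  refine convexOn_of_hasDerivWithinAt2_nonneg (convex_Ici 0)
    (f' := fun x => -(derivative S).eval x / S.eval x ^ 2)
    (f'' := fun x => (2 * (derivative S).eval x ^ 2 - S.eval x * (derivative (derivative S)).eval x)
      / S.eval x ^ 3) ?_ ?_ ?_ ?_
  · exact S.continuous.continuousOn.inv₀ fun x hx => (eval_geomSumPoly_pos n hx).ne'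
  all_goals
    rw [interior_Ici]
    intro x hx
    have hS := (eval_geomSumPoly_pos n (le_of_lt hx)).ne'
    change S.eval x ≠ 0 at hS
  · exact ((S.hasDerivAt x).inv hS).hasDerivWithinAt
  · refine ((((derivative S).hasDerivAt x).neg.div ((S.hasDerivAt x).pow 2)
      (pow_ne_zero 2 hS)).congr_deriv ?_).hasDerivWithinAt
    simp only [Pi.pow_apply, Pi.neg_apply]
    field_simp
    ring
  · exact div_nonneg (two_mul_eval_derivative_sq_sub_nonneg n hx.le)
      (pow_nonneg (eval_geomSumPoly_pos n hx.le).le 3)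

end GeomSum

lemma eval_geomSumPoly_one (n : ℕ) : (geomSumPoly n).eval 1 = n + 1 := by
  simp [geomSumPoly, Polynomial.eval_finsetSum]

lemma revenueRate_eq_of_nonneg (R C μ : ℝ) (n : ℕ) {ρ : ℝ} (hρ : 0 ≤ ρ) :
    revenueRate R C μ n ρ = (R * μ - C * n) * (1 - ((geomSumPoly n).eval ρ)⁻¹) := by
  have hS := (eval_geomSumPoly_pos n hρ).ne'
  rw [revenueRate]
  split_ifs with h1
  · rw [h1, eval_geomSumPoly_one]
    field_simp
    ring
  · have hgeom := congrArg (Polynomial.eval ρ) (X_sub_one_mul_geomSumPoly n)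
    simp only [Polynomial.eval_mul, Polynomial.eval_sub, Polynomial.eval_X, Polynomial.eval_one,
      Polynomial.eval_pow] at hgeom
    have hden : 1 - ρ ^ (n + 1) ≠ 0 := by
      rw [← neg_sub, ← hgeom, neg_ne_zero]
      exact mul_ne_zero (sub_ne_zero.2 h1) hS
    congr 1
    field_simp
    linear_combination hgeom

lemma concaveOn_revenueRate {R C μ : ℝ} {n : ℕ} (hRC : C * n ≤ R * μ) :
    ConcaveOn ℝ (Ici 0) (revenueRate R C μ n) := by
  refine ((convexOn_inv_eval_geomSumPoly n).neg.add_const 1).smul (sub_nonneg.2 hRC) |>.congr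
    fun ρ hρ => ?_
  simp only [revenueRate_eq_of_nonneg R C μ n hρ, Pi.add_apply, Pi.neg_apply, smul_eq_mul]
  ring

lemma continuousOn_revenueRate (R C μ : ℝ) (n : ℕ) :
    ContinuousOn (revenueRate R C μ n) (Ici 0) := by
  refine ContinuousOn.congr ?_ fun ρ hρ => revenueRate_eq_of_nonneg R C μ n hρ
  exact continuousOn_const.mul (continuousOn_const.sub ((geomSumPoly n).continuous.continuousOn.inv₀
    fun ρ hρ => (eval_geomSumPoly_pos n hρ).ne'))

lemma ConcaveOn.add_slope_mul_le {s : Set ℝ} {f : ℝ → ℝ} (hf : ConcaveOn ℝ s f) {x y z : ℝ}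
    (hx : x ∈ s) (hz : z ∈ s) (hxy : x ≤ y) (hyz : y ≤ z) :
    f x + slope f x z * (y - x) ≤ f y := by
  rcases hxy.eq_or_lt with rfl | hxy
  · simp
  have hxz : 0 < z - x := by linarith
  have h := hf.2 hx hz (div_nonneg (by linarith) hxz.le : 0 ≤ (z - y) / (z - x))
    (div_nonneg (by linarith) hxz.le : 0 ≤ (y - x) / (z - x))
    (by rw [← add_div, div_eq_one_iff_eq hxz.ne']; ring)
  have hy : ((z - y) / (z - x)) • x + ((y - x) / (z - x)) • z = y := by
    simp only [smul_eq_mul]; field_simp; ring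
  rw [hy, smul_eq_mul, smul_eq_mul] at h
  calc f x + slope f x z * (y - x)
        = (z - y) / (z - x) * f x + (y - x) / (z - x) * f z := by
          rw [slope_def_field]; field_simp; ring
    _ ≤ f y := h

section MAD

variable {a b m d : ℝ}

-- The left side is the chord of `f` over `[a, m]` for `x ≤ m` and over `[m, b]` for `x ≥ m`.
lemma ConcaveOn.add_mul_sub_mul_abs_le {f : ℝ → ℝ} (hf : ConcaveOn ℝ (Icc a b) f)
    (ham : a ≤ m) (hmb : m ≤ b) {x : ℝ} (hx : x ∈ Icc a b) :
    f m + (slope f a m + slope f m b) / 2 * (x - m) - (slope f a m - slope f m b) / 2 * |x - m|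
      ≤ f x := by
  have ha : a ∈ Icc a b := left_mem_Icc.2 (ham.trans hmb)
  have hb : b ∈ Icc a b := right_mem_Icc.2 (ham.trans hmb)
  have hm : m ∈ Icc a b := ⟨ham, hmb⟩
  rcases le_total x m with hxm | hmx
  · have hchord : slope f a m * (m - a) = f m - f a := by
      rcases ham.eq_or_lt with rfl | ham
      · simp
      · rw [slope_def_field]; field_simp
    have := hf.add_slope_mul_le ha hm hx.1 hxm
    rw [abs_of_nonpos (sub_nonpos.2 hxm)]
    linear_combination this - hchord
  · have := hf.add_slope_mul_le hm hb hmx hx.2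
    rw [abs_of_nonneg (sub_nonneg.2 hmx)]
    linear_combination this

lemma integrable_of_mem_MADSet {P : Measure ℝ} (hP : P ∈ MADSet a b m d) {f : ℝ → ℝ}
    (hf : ContinuousOn f (Icc a b)) : Integrable f P := by
  have := hP.1
  rw [← Measure.restrict_eq_self_of_ae_mem (mem_ae_iff.2 hP.2.1)]
  exact hf.integrableOn_Icc

lemma integral_add_mul_sub_mul_abs_of_mem_MADSet {P : Measure ℝ} (hP : P ∈ MADSet a b m d)
    (α β γ : ℝ) : ∫ x, α + β * (x - m) - γ * |x - m| ∂P = α - γ * d := by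
  have := hP.1
  have hid : Integrable (fun x : ℝ => x) P := integrable_of_mem_MADSet hP continuousOn_id
  have habs : Integrable (fun x : ℝ => |x - m|) P :=
    integrable_of_mem_MADSet hP (continuous_id.sub continuous_const).abs.continuousOn
  have hlin : Integrable (fun x => β * (x - m)) P := (hid.sub (integrable_const m)).const_mul β
  have haff : Integrable (fun x => α + β * (x - m)) P := (integrable_const α).add hlin
  rw [integral_sub haff (habs.const_mul γ),
    integral_add (integrable_const α) hlin, integral_const_mul, integral_const_mul,
    integral_sub hid (integrable_const m), hP.2.2.1, hP.2.2.2]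
  simp

theorem ConcaveOn.le_integral_of_mem_MADSet {f : ℝ → ℝ} (hf : ConcaveOn ℝ (Icc a b) f)
    (hfc : ContinuousOn f (Icc a b)) (ham : a ≤ m) (hmb : m ≤ b) {P : Measure ℝ}
    (hP : P ∈ MADSet a b m d) :
    f m - (slope f a m - slope f m b) / 2 * d ≤ ∫ x, f x ∂P := by
  rw [← integral_add_mul_sub_mul_abs_of_mem_MADSet hP (f m) ((slope f a m + slope f m b) / 2)]
  refine integral_mono_ae ?_ (integrable_of_mem_MADSet hP hfc) ?_
  · exact integrable_of_mem_MADSet hP (by fun_prop)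
  · filter_upwards [mem_ae_iff.2 hP.2.1] with x hx
    exact hf.add_mul_sub_mul_abs_le ham hmb hx

noncomputable def madExtremalMeasure (a b m d : ℝ) : Measure ℝ :=
  ENNReal.ofReal (d / (2 * (m - a))) • Measure.dirac a +
  ENNReal.ofReal (1 - d / (2 * (m - a)) - d / (2 * (b - m))) • Measure.dirac m +
  ENNReal.ofReal (d / (2 * (b - m))) • Measure.dirac b

lemma integral_ofReal_smul_dirac {w : ℝ} (hw : 0 ≤ w) (x : ℝ) (f : ℝ → ℝ) :
    ∫ y, f y ∂(ENNReal.ofReal w • Measure.dirac x) = w * f x := by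
  rw [integral_smul_measure, integral_dirac, ENNReal.toReal_ofReal hw, smul_eq_mul]

lemma integrable_ofReal_smul_dirac {f : ℝ → ℝ} (w x : ℝ) :
    Integrable f (ENNReal.ofReal w • Measure.dirac x) :=
  (integrable_dirac enorm_lt_top).smul_measure ENNReal.ofReal_ne_top

lemma one_sub_div_sub_div_nonneg (ham : a < m) (hmb : m < b)
    (hd : d ≤ 2 * (m - a) * (b - m) / (b - a)) :
    0 ≤ 1 - d / (2 * (m - a)) - d / (2 * (b - m)) := by
  have hma : 0 < m - a := by linarith
  have hbm : 0 < b - m := by linarith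
  rw [le_div_iff₀ (by linarith)] at hd
  have : d / (2 * (m - a)) + d / (2 * (b - m)) ≤ 1 := by
    rw [div_add_div _ _ (by positivity) (by positivity), div_le_one (by positivity)]; nlinarith
  linarith

lemma integral_madExtremalMeasure (ham : a < m) (hmb : m < b) (hd0 : 0 ≤ d)
    (hd : d ≤ 2 * (m - a) * (b - m) / (b - a)) (f : ℝ → ℝ) :
    ∫ x, f x ∂(madExtremalMeasure a b m d) = d / (2 * (m - a)) * f a +
      (1 - d / (2 * (m - a)) - d / (2 * (b - m))) * f m + d / (2 * (b - m)) * f b := by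
  have hma : 0 < m - a := by linarith
  have hbm : 0 < b - m := by linarith
  have hi := integrable_ofReal_smul_dirac (f := f)
  rw [madExtremalMeasure, integral_add_measure ((hi _ _).add_measure (hi _ _)) (hi _ _),
    integral_add_measure (hi _ _) (hi _ _), integral_ofReal_smul_dirac (by positivity),
    integral_ofReal_smul_dirac (one_sub_div_sub_div_nonneg ham hmb hd),
    integral_ofReal_smul_dirac (by positivity)]

lemma madExtremalMeasure_mem_MADSet (ham : a < m) (hmb : m < b) (hd0 : 0 ≤ d)
    (hd : d ≤ 2 * (m - a) * (b - m) / (b - a)) :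
    madExtremalMeasure a b m d ∈ MADSet a b m d := by
  have hma : 0 < m - a := by linarith
  have hbm : 0 < b - m := by linarith
  refine ⟨⟨?_⟩, ?_, ?_, ?_⟩
  · simp only [madExtremalMeasure, Measure.add_apply, Measure.smul_apply, measure_univ,
      smul_eq_mul, mul_one]
    have hpm := one_sub_div_sub_div_nonneg ham hmb hd
    rw [← ENNReal.ofReal_add (by positivity) hpm,
      ← ENNReal.ofReal_add (add_nonneg (by positivity) hpm) (by positivity),
      ← ENNReal.ofReal_one]
    congr 1
    ring
  · simp [madExtremalMeasure, ham.le, hmb.le, (ham.trans hmb).le]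
  · rw [integral_madExtremalMeasure ham hmb hd0 hd]
    field_simp
    ring
  · rw [integral_madExtremalMeasure ham hmb hd0 hd, sub_self, abs_zero,
      abs_of_nonpos (by linarith : a - m ≤ 0), abs_of_pos hbm]
    field_simp
    ring

theorem ConcaveOn.isLeast_integral_MADSet {f : ℝ → ℝ} (hf : ConcaveOn ℝ (Icc a b) f)
    (hfc : ContinuousOn f (Icc a b)) (ham : a < m) (hmb : m < b) (hd0 : 0 ≤ d)
    (hd : d ≤ 2 * (m - a) * (b - m) / (b - a)) :
    IsLeast ((fun P => ∫ x, f x ∂P) '' MADSet a b m d)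
      (d / (2 * (m - a)) * f a + (1 - d / (2 * (m - a)) - d / (2 * (b - m))) * f m +
        d / (2 * (b - m)) * f b) := by
  have hvalue : d / (2 * (m - a)) * f a + (1 - d / (2 * (m - a)) - d / (2 * (b - m))) * f m +
      d / (2 * (b - m)) * f b = f m - (slope f a m - slope f m b) / 2 * d := by
    rw [slope_def_field, slope_def_field]
    field_simp [(by linarith : m - a ≠ 0), (by linarith : b - m ≠ 0)]
    ring
  refine ⟨⟨_, madExtremalMeasure_mem_MADSet ham hmb hd0 hd,
    integral_madExtremalMeasure ham hmb hd0 hd f⟩, ?_⟩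
  rintro _ ⟨P, hP, rfl⟩
  rw [hvalue]
  exact hf.le_integral_of_mem_MADSet hfc ham.le hmb.le hP

end MAD

theorem stmt10_general (R C μ : ℝ)
    (n : ℕ) (hRC : C * (n : ℝ) ≤ R * μ)
    (a b m d : ℝ) (ha : 0 ≤ a) (ham : a < m) (hmb : m < b)
    (hd0 : 0 < d) (hd : d < 2 * (m - a) * (b - m) / (b - a)) :
    sInf ((fun P => ∫ ρ, revenueRate R C μ n ρ ∂P) '' MADSet a b m d) =
      d / (2 * (m - a)) * revenueRate R C μ n a +
      (1 - d / (2 * (m - a)) - d / (2 * (b - m))) * revenueRate R C μ n m +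
      d / (2 * (b - m)) * revenueRate R C μ n b := by
  have hIcc : Icc a b ⊆ Ici 0 := fun x hx => ha.trans hx.1
  exact (((concaveOn_revenueRate hRC).subset hIcc (convex_Icc a b)).isLeast_integral_MADSet
    ((continuousOn_revenueRate R C μ n).mono hIcc) ham hmb hd0.le hd.le).csInf_eq

/-- The worst-case expected revenue over the MAD ambiguity set is given by
the three-point distribution supported on `{a, m, b}`. -/
theorem stmt10 (R C μ : ℝ) (hR : 0 < R) (hC : 0 < C) (hμ : 0 < μ)
    (n : ℕ) (hn : 1 ≤ n) (hRC : C * (n : ℝ) ≤ R * μ)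
    (a b m d : ℝ) (ha : 0 ≤ a) (ham : a < m) (hmb : m < b)
    (hd0 : 0 < d) (hd : d < 2 * (m - a) * (b - m) / (b - a)) :
    sInf ((fun P => ∫ ρ, revenueRate R C μ n ρ ∂P) '' MADSet a b m d) =
      d / (2 * (m - a)) * revenueRate R C μ n a +
      (1 - d / (2 * (m - a)) - d / (2 * (b - m))) * revenueRate R C μ n m +
      d / (2 * (b - m)) * revenueRate R C μ n b :=
  stmt10_general R C μ n hRC a b m d ha ham hmb hd0 hd
end

section
/- Let a < m < b be real numbers, let 0 < d < 2(m−a)(b−m)/(b−a), and let f : [a,b] → ℝ be a continuous concave function. Then the three-point probability measure P* placing masses p₁ = d/(2(m−a)), p₂ = 1 − d/(2(m−a)) − d/(2(b−m)), and p₃ = d/(2(b−m)) at a, m, and b respectively belongs to the MAD ambiguity set 𝒫(a,b,m,d), and for every P ∈ 𝒫(a,b,m,d) one has ∫ f dP ≥ p₁ f(a) + p₂ f(m) + p₃ f(b); that is, P* attains inf_{P ∈ 𝒫(a,b,m,d)} ∫ f dP. -/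
/-!
On `[a, b]` a concave `f` lies above the broken line through `(a, f a)`, `(m, f m)`, `(b, f b)`.
That broken line has the form `α + β (x - m) + γ |x - m|`, so its integral against any `P` with
mean `m` and mean absolute deviation `d` is `α + γ d`, the same for all such `P`. Hence
`∫ f dP ≥ ∫ (broken line) dP = ∫ (broken line) dP* = ∫ f dP*`, the last step because `P*`
only charges the three nodes `a, m, b`, where the broken line meets `f`.
-/

open MeasureTheory Set

lemma sub_mul_slope {k : Type*} [Field k] (f : k → k) (u v : k) :
    (v - u) * slope f u v = f v - f u :=
  sub_smul_slope f u v

section PiecewiseSecant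

/-- The broken line through `(a, f a)`, `(m, f m)`, `(b, f b)` (for `a < m < b`). -/
noncomputable def piecewiseSecant (f : ℝ → ℝ) (a m b : ℝ) (x : ℝ) : ℝ :=
  f m + (slope f m a + slope f m b) / 2 * (x - m) + (slope f m b - slope f m a) / 2 * |x - m|

variable {f : ℝ → ℝ} {a m b : ℝ}

lemma continuous_piecewiseSecant : Continuous (piecewiseSecant f a m b) := by
  unfold piecewiseSecant; fun_prop

lemma piecewiseSecant_left (ham : a < m) : piecewiseSecant f a m b a = f a := by
  rw [piecewiseSecant, abs_of_neg (sub_neg.2 ham)]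
  linear_combination sub_mul_slope f m a

lemma piecewiseSecant_center : piecewiseSecant f a m b m = f m := by
  simp [piecewiseSecant]

lemma piecewiseSecant_right (hmb : m < b) : piecewiseSecant f a m b b = f b := by
  rw [piecewiseSecant, abs_of_pos (sub_pos.2 hmb)]
  linear_combination sub_mul_slope f m b

lemma ConcaveOn.piecewiseSecant_le {s : Set ℝ} (hf : ConcaveOn ℝ s f) (ha : a ∈ s) (hm : m ∈ s)
    (hb : b ∈ s) {x : ℝ} (hx : x ∈ s) (hax : a ≤ x) (hxb : x ≤ b) :
    piecewiseSecant f a m b x ≤ f x := by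
  have hs := sub_mul_slope f m x
  rcases lt_trichotomy x m with hxm | rfl | hmx
  · have hslope : slope f m x ≤ slope f m a :=
      hf.slope_anti hm ⟨ha, (hax.trans_lt hxm).ne⟩ ⟨hx, hxm.ne⟩ hax
    have := mul_le_mul_of_nonpos_left hslope (sub_nonpos.2 hxm.le)
    rw [piecewiseSecant, abs_of_neg (sub_neg.2 hxm)]
    linarith
  · exact piecewiseSecant_center.le
  · have hslope : slope f m b ≤ slope f m x :=
      hf.slope_anti hm ⟨hx, hmx.ne'⟩ ⟨hb, (hmx.trans_le hxb).ne'⟩ hxb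
    have := mul_le_mul_of_nonneg_left hslope (sub_nonneg.2 hmx.le)
    rw [piecewiseSecant, abs_of_pos (sub_pos.2 hmx)]
    linarith

end PiecewiseSecant

lemma integrable_of_continuousOn_of_measure_compl_eq_zero {X : Type*} [TopologicalSpace X]
    [T2Space X] [MeasurableSpace X] [OpensMeasurableSpace X] {μ : Measure X} [IsFiniteMeasure μ]
    {K : Set X} (hK : IsCompact K) (hμK : μ Kᶜ = 0) {g : X → ℝ} (hg : ContinuousOn g K) :
    Integrable g μ := by
  rw [← Measure.restrict_eq_self_of_ae_mem (ae_iff.2 hμK)]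
  exact hg.integrableOn_compact hK

lemma integral_threePoint {q₁ q₂ q₃ : ℝ} (h₁ : 0 ≤ q₁) (h₂ : 0 ≤ q₂) (h₃ : 0 ≤ q₃)
    (x y z : ℝ) (g : ℝ → ℝ) :
    ∫ ρ, g ρ ∂(ENNReal.ofReal q₁ • Measure.dirac x + ENNReal.ofReal q₂ • Measure.dirac y +
      ENNReal.ofReal q₃ • Measure.dirac z) = q₁ * g x + q₂ * g y + q₃ * g z := by
  have hint (q w : ℝ) : Integrable g (ENNReal.ofReal q • Measure.dirac w) :=
    (integrable_dirac (by simp)).smul_measure ENNReal.ofReal_ne_top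
  rw [integral_add_measure ((hint q₁ x).add_measure (hint q₂ y)) (hint q₃ z),
    integral_add_measure (hint q₁ x) (hint q₂ y)]
  simp [integral_smul_measure, ENNReal.toReal_ofReal, h₁, h₂, h₃]

namespace MADSet

variable {a b m d : ℝ} {P : Measure ℝ}

lemma threePoint_mem {q₁ q₂ q₃ x y z : ℝ} (h₁ : 0 ≤ q₁) (h₂ : 0 ≤ q₂) (h₃ : 0 ≤ q₃)
    (hsum : q₁ + q₂ + q₃ = 1) (hx : x ∈ Icc a b) (hy : y ∈ Icc a b) (hz : z ∈ Icc a b)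
    (hmean : q₁ * x + q₂ * y + q₃ * z = m)
    (hmad : q₁ * |x - m| + q₂ * |y - m| + q₃ * |z - m| = d) :
    ENNReal.ofReal q₁ • Measure.dirac x + ENNReal.ofReal q₂ • Measure.dirac y +
      ENNReal.ofReal q₃ • Measure.dirac z ∈ MADSet a b m d := by
  refine ⟨⟨?_⟩, ?_, ?_, ?_⟩
  · simp only [Measure.add_apply, Measure.smul_apply, measure_univ, smul_eq_mul, mul_one]
    rw [← ENNReal.ofReal_add h₁ h₂, ← ENNReal.ofReal_add (by positivity) h₃, hsum,
      ENNReal.ofReal_one]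
  · simp [Measure.add_apply, Measure.smul_apply, hx, hy, hz]
  · exact (integral_threePoint h₁ h₂ h₃ x y z id).trans hmean
  · exact (integral_threePoint h₁ h₂ h₃ x y z (fun ρ => |ρ - m|)).trans hmad

lemma ae_mem_Icc (hP : P ∈ MADSet a b m d) : ∀ᵐ x ∂P, x ∈ Icc a b :=
  ae_iff.2 hP.2.1

lemma integrable (hP : P ∈ MADSet a b m d) {g : ℝ → ℝ} (hg : ContinuousOn g (Icc a b)) :
    Integrable g P :=
  have := hP.1
  integrable_of_continuousOn_of_measure_compl_eq_zero isCompact_Icc hP.2.1 hg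

lemma integral_affine_add_abs (hP : P ∈ MADSet a b m d) (α β γ : ℝ) :
    ∫ x, α + β * (x - m) + γ * |x - m| ∂P = α + γ * d := by
  have hid : Integrable (fun x => x) P := integrable hP continuousOn_id
  obtain ⟨hprob, -, hmean, hmad⟩ := hP
  have hcentered : Integrable (fun x => x - m) P := hid.sub (integrable_const m)
  have haffine : Integrable (fun x => α + β * (x - m)) P :=
    (integrable_const α).add (hcentered.const_mul β)
  rw [integral_add haffine (hcentered.abs.const_mul γ),
    integral_add (integrable_const α) (hcentered.const_mul β), integral_const_mul,
    integral_const_mul, integral_sub hid (integrable_const m), hmean, hmad]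
  simp

lemma integral_piecewiseSecant (hP : P ∈ MADSet a b m d) (f : ℝ → ℝ) (a' b' : ℝ) :
    ∫ x, piecewiseSecant f a' m b' x ∂P = f m + (slope f m b' - slope f m a') / 2 * d :=
  integral_affine_add_abs hP _ _ _

end MADSet

lemma outer_weights_le_one {a b m d : ℝ} (ham : a < m) (hmb : m < b)
    (hd : d < 2 * (m - a) * (b - m) / (b - a)) :
    d / (2 * (m - a)) + d / (2 * (b - m)) ≤ 1 := by
  have hma : 0 < m - a := sub_pos.2 ham
  have hbm : 0 < b - m := sub_pos.2 hmb
  have hd' : d * (b - a) < 2 * (m - a) * (b - m) := (lt_div_iff₀ (by linarith)).1 hd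
  rw [div_add_div _ _ (by positivity) (by positivity), div_le_one (by positivity)]
  nlinarith

/-- Ben-Tal–Hochman: for a continuous concave function, the worst-case expectation
over the MAD ambiguity set is attained by the three-point distribution on `{a, m, b}`. -/
theorem stmt11 (a b m d : ℝ) (ham : a < m) (hmb : m < b)
    (hd0 : 0 < d) (hd : d < 2 * (m - a) * (b - m) / (b - a))
    (f : ℝ → ℝ) (hcont : ContinuousOn f (Set.Icc a b))
    (hconc : ConcaveOn ℝ (Set.Icc a b) f) :
    let p₁ : ℝ := d / (2 * (m - a))
    let p₃ : ℝ := d / (2 * (b - m))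
    let p₂ : ℝ := 1 - p₁ - p₃
    let Pstar : Measure ℝ :=
      ENNReal.ofReal p₁ • Measure.dirac a + ENNReal.ofReal p₂ • Measure.dirac m +
        ENNReal.ofReal p₃ • Measure.dirac b
    Pstar ∈ MADSet a b m d ∧
    (∀ P ∈ MADSet a b m d, p₁ * f a + p₂ * f m + p₃ * f b ≤ ∫ ρ, f ρ ∂P) ∧
    (∫ ρ, f ρ ∂Pstar) = p₁ * f a + p₂ * f m + p₃ * f b := by
  intro p₁ p₃ p₂ Pstar
  have hma : 0 < m - a := sub_pos.2 ham
  have hbm : 0 < b - m := sub_pos.2 hmb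
  have hp₁ : 0 ≤ p₁ := by positivity
  have hp₃ : 0 ≤ p₃ := by positivity
  have hp₂ : 0 ≤ p₂ := by linarith [outer_weights_le_one ham hmb hd]
  have ha : a ∈ Icc a b := left_mem_Icc.2 (ham.trans hmb).le
  have hm : m ∈ Icc a b := ⟨ham.le, hmb.le⟩
  have hb : b ∈ Icc a b := right_mem_Icc.2 (ham.trans hmb).le
  have hPstar : Pstar ∈ MADSet a b m d := by
    refine MADSet.threePoint_mem hp₁ hp₂ hp₃ (by ring) ha hm hb ?_ ?_
    · simp only [p₂, p₁, p₃]; field_simp; ring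
    · simp only [p₁, p₃, sub_self, abs_zero, abs_of_neg (sub_neg.2 ham), abs_of_pos hbm]
      field_simp; ring
  refine ⟨hPstar, fun P hP => ?_, integral_threePoint hp₁ hp₂ hp₃ a m b f⟩
  calc p₁ * f a + p₂ * f m + p₃ * f b = ∫ x, piecewiseSecant f a m b x ∂Pstar := by
        rw [integral_threePoint hp₁ hp₂ hp₃, piecewiseSecant_left ham, piecewiseSecant_center,
          piecewiseSecant_right hmb]
    _ = ∫ x, piecewiseSecant f a m b x ∂P := by
        rw [MADSet.integral_piecewiseSecant hPstar, MADSet.integral_piecewiseSecant hP]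
    _ ≤ ∫ x, f x ∂P := by
        refine integral_mono_ae (MADSet.integrable hP continuous_piecewiseSecant.continuousOn)
          (MADSet.integrable hP hcont) ?_
        filter_upwards [MADSet.ae_mem_Icc hP] with x hx
        exact hconc.piecewiseSecant_le ha hm hb hx hx.1 hx.2
end

section
/- Let a < b be real numbers, let δ ∈ (0,1), let N ≥ 1, and let ρ̂₁, …, ρ̂_N be independent identically distributed random variables with values in [a,b] and common law P*. Let m = E[ρ̃] and d = E[|ρ̃ − m|] denote the mean and mean-absolute deviation under P*, and let m̂ = (1/N)∑_{i=1}^N ρ̂_i and d̂ = (1/N)∑_{i=1}^N |ρ̂_i − m̂| denote the empirical mean and empirical MAD. Then with probability at least 1 − δ, both |m̂ − m| ≤ (b−a)·√(log(4/δ)/(2N)) and |d̂ − d| ≤ (b−a)·√(9·log(4/δ)/(2N)) hold. -/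
/-!
Hoeffding's inequality, applied once to the samples `ρ̂ᵢ ∈ [a, b]` (mean `m`) and once to the
independent variables `|ρ̂ᵢ - m| ∈ [0, b - a]` (mean `d`), bounds each of the two bad events by
`δ / 2` at radius `ε = (b - a) √(log (4 / δ) / (2N))`. On the remaining event `|m̂ - m| ≤ ε`, and
since moving the centre of an empirical MAD from `m` to `m̂` changes it by at most `|m̂ - m|`,
also `|d̂ - d| ≤ 2ε ≤ 3ε`.
-/

open MeasureTheory ProbabilityTheory Real Finset

namespace ProbabilityTheory

variable {Ω : Type*} [MeasurableSpace Ω] {μ : Measure Ω}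

lemma HasSubgaussianMGF.measureReal_le_abs_le [IsFiniteMeasure μ] {X : Ω → ℝ} {c : NNReal}
    (h : HasSubgaussianMGF X c μ) {ε : ℝ} (hε : 0 ≤ ε) :
    μ.real {ω | ε ≤ |X ω|} ≤ 2 * exp (-ε ^ 2 / (2 * c)) := by
  calc μ.real {ω | ε ≤ |X ω|} ≤ μ.real ({ω | ε ≤ X ω} ∪ {ω | ε ≤ (-X) ω}) :=
        measureReal_mono fun ω (hω : ε ≤ |X ω|) ↦ show ε ≤ X ω ∨ ε ≤ -X ω from le_abs.1 hω
    _ ≤ μ.real {ω | ε ≤ X ω} + μ.real {ω | ε ≤ (-X) ω} := measureReal_union_le _ _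
    _ ≤ exp (-ε ^ 2 / (2 * c)) + exp (-ε ^ 2 / (2 * c)) :=
        add_le_add (h.measure_ge_le hε) (h.neg.measure_ge_le hε)
    _ = 2 * exp (-ε ^ 2 / (2 * c)) := (two_mul _).symm

lemma measureReal_le_abs_sum_div_card_sub_le {ι : Type*} [Fintype ι] [Nonempty ι]
    {X : ι → Ω → ℝ} (hindep : iIndepFun X μ) (hmeas : ∀ i, AEMeasurable (X i) μ) {a b m : ℝ}
    (hX : ∀ i, ∀ᵐ ω ∂μ, X i ω ∈ Set.Icc a b) (hmean : ∀ i, μ[X i] = m) {ε : ℝ} (hε : 0 ≤ ε) :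
    μ.real {ω | ε ≤ |(∑ i, X i ω) / Fintype.card ι - m|} ≤
      2 * exp (-2 * Fintype.card ι * ε ^ 2 / (b - a) ^ 2) := by
  have := hindep.isProbabilityMeasure
  set n : ℝ := (Fintype.card ι : ℝ)
  have hn : 0 < n := by positivity
  have hsum : HasSubgaussianMGF (fun ω ↦ ∑ i, (X i ω - m)) (∑ _i : ι, (‖b - a‖₊ / 2) ^ 2) μ :=
    HasSubgaussianMGF.sum_of_iIndepFun
      (hindep.comp (fun _ x ↦ x - m) fun _ ↦ measurable_sub_const m)
      fun i _ ↦ hmean i ▸ hasSubgaussianMGF_of_mem_Icc (hmeas i) (hX i)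
  have hset : {ω | ε ≤ |(∑ i, X i ω) / n - m|} = {ω | n * ε ≤ |∑ i, (X i ω - m)|} := by
    ext ω
    rw [Set.mem_ofPred_eq, Set.mem_ofPred_eq, ← mul_le_mul_iff_of_pos_left hn, ← abs_of_pos hn,
      ← abs_mul, abs_of_pos hn, mul_sub, mul_div_cancel₀ _ hn.ne', sum_sub_distrib, sum_const,
      card_univ, nsmul_eq_mul]
  rw [hset]
  refine (hsum.measureReal_le_abs_le (by positivity)).trans_eq ?_
  congr 2
  rcases eq_or_ne (b - a) 0 with hab | hab
  · simp [hab]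
  push_cast
  rw [sum_const, card_univ, nsmul_eq_mul, norm_eq_abs, div_pow, sq_abs]
  field_simp
  ring

lemma measureReal_le_abs_sum_comp_div_card_sub_integral_le {ι : Type*} [Fintype ι] [Nonempty ι]
    {X : ι → Ω → ℝ} {P : Measure ℝ} (hindep : iIndepFun X μ) (hmeas : ∀ i, Measurable (X i))
    (hdist : ∀ i, μ.map (X i) = P) {f : ℝ → ℝ} (hf : Measurable f) {a b : ℝ}
    (hfX : ∀ i ω, f (X i ω) ∈ Set.Icc a b) {ε : ℝ} (hε : 0 ≤ ε) :
    μ.real {ω | ε ≤ |(∑ i, f (X i ω)) / Fintype.card ι - ∫ x, f x ∂P|} ≤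
      2 * exp (-2 * Fintype.card ι * ε ^ 2 / (b - a) ^ 2) :=
  measureReal_le_abs_sum_div_card_sub_le (hindep.comp (fun _ ↦ f) fun _ ↦ hf)
    (fun i ↦ (hf.comp (hmeas i)).aemeasurable) (fun i ↦ ae_of_all _ (hfX i))
    (fun i ↦ by rw [← hdist i, integral_map (hmeas i).aemeasurable hf.aestronglyMeasurable]; rfl) hε

end ProbabilityTheory

lemma abs_sum_abs_sub_div_card_sub_le {ι : Type*} (s : Finset ι) (x : ι → ℝ) (c m d : ℝ) :
    |(∑ i ∈ s, |x i - c|) / #s - d| ≤ |c - m| + |(∑ i ∈ s, |x i - m|) / #s - d| := by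
  have hcentre : |(∑ i ∈ s, |x i - c|) / #s - (∑ i ∈ s, |x i - m|) / #s| ≤ |c - m| := by
    rw [← sub_div, ← sum_sub_distrib, abs_div, Nat.abs_cast]
    refine div_le_of_le_mul₀ (by positivity) (abs_nonneg _) ?_
    calc |∑ i ∈ s, (|x i - c| - |x i - m|)| ≤ ∑ i ∈ s, |(|x i - c| - |x i - m|)| :=
          abs_sum_le_sum_abs _ _
      _ ≤ ∑ i ∈ s, |c - m| := sum_le_sum fun i _ ↦
          (abs_abs_sub_abs_le_abs_sub _ _).trans_eq (by rw [abs_sub_comm]; ring_nf)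
      _ = |c - m| * #s := by rw [sum_const, nsmul_eq_mul, mul_comm]
  exact (abs_sub_le _ _ _).trans (add_le_add_left hcentre _)

lemma MeasureTheory.ofReal_one_sub_add_le_measure {Ω : Type*} [MeasurableSpace Ω]
    {μ : Measure Ω} [IsProbabilityMeasure μ] {s t u : Set Ω} {p q : ℝ} (hs : μ.real s ≤ p)
    (ht : μ.real t ≤ q) (h : (s ∪ t)ᶜ ⊆ u) : ENNReal.ofReal (1 - (p + q)) ≤ μ u := by
  have hst : 1 - (p + q) ≤ 1 - μ.real (s ∪ t) := by linarith [measureReal_union_le (μ := μ) s t]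
  refine (ENNReal.ofReal_le_ofReal hst).trans ?_
  rw [ENNReal.ofReal_sub _ measureReal_nonneg, ENNReal.ofReal_one, measureReal_def,
    ENNReal.ofReal_toReal (measure_ne_top μ _), tsub_le_iff_left, ← measure_univ (μ := μ)]
  exact (measure_univ_le_add_compl _).trans (add_le_add le_rfl (measure_mono h))

lemma two_mul_exp_neg_mul_sq_sqrt_log_div_eq {a b δ n : ℝ} (hab : a < b) (hδ : δ ∈ Set.Ioo 0 4)
    (hn : 0 < n) :
    2 * exp (-2 * n * ((b - a) * √(log (4 / δ) / (2 * n))) ^ 2 / (b - a) ^ 2) = δ / 2 := by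
  have hL : 0 ≤ log (4 / δ) / (2 * n) :=
    div_nonneg (log_nonneg ((one_le_div hδ.1).2 hδ.2.le)) (by positivity)
  have hexp : -2 * n * ((b - a) * √(log (4 / δ) / (2 * n))) ^ 2 / (b - a) ^ 2 = log (δ / 4) := by
    rw [mul_pow, sq_sqrt hL, ← inv_div 4 δ, log_inv]
    field_simp [(sub_pos.2 hab).ne']
  rw [hexp, exp_log (by linarith [hδ.1])]
  ring

theorem stmt13_general (a b : ℝ) (hab : a < b) (δ : ℝ) (hδ : δ ∈ Set.Ioo (0 : ℝ) 1)
    (N : ℕ) (hN : 1 ≤ N)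
    (Ω : Type*) [MeasurableSpace Ω] (Pr : Measure Ω) [IsProbabilityMeasure Pr]
    (X : Fin N → Ω → ℝ) (hmeas : ∀ i, Measurable (X i))
    (hindep : iIndepFun X Pr)
    (Pstar : Measure ℝ)
    (hdist : ∀ i, Measure.map (X i) Pr = Pstar)
    (hrange : ∀ i ω, X i ω ∈ Set.Icc a b) :
    let m : ℝ := ∫ x, x ∂Pstar
    let d : ℝ := ∫ x, |x - m| ∂Pstar
    let mhat : Ω → ℝ := fun ω => (∑ i, X i ω) / N
    let dhat : Ω → ℝ := fun ω => (∑ i, |X i ω - mhat ω|) / N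
    ENNReal.ofReal (1 - δ) ≤
      Pr {ω | |mhat ω - m| ≤ (b - a) * Real.sqrt (Real.log (4 / δ) / (2 * N)) ∧
             |dhat ω - d| ≤ (b - a) * Real.sqrt (9 * Real.log (4 / δ) / (2 * N))} := by
  intro m d mhat dhat
  have : NeZero N := ⟨by omega⟩
  set ε := (b - a) * √(log (4 / δ) / (2 * N))
  have hε : 0 ≤ ε := mul_nonneg (sub_pos.2 hab).le (sqrt_nonneg _)
  have h3ε : (b - a) * √(9 * log (4 / δ) / (2 * N)) = 3 * ε := by
    rw [mul_div_assoc, sqrt_mul (by norm_num), show (9 : ℝ) = 3 ^ 2 by norm_num,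
      sqrt_sq (by norm_num)]
    ring
  have htail := two_mul_exp_neg_mul_sq_sqrt_log_div_eq (n := N) hab ⟨hδ.1, by linarith [hδ.2]⟩
    (by positivity)
  have hm : m ∈ Set.Icc a b := by
    rw [show m = Pr[X 0] from (hdist 0 ▸ integral_map (hmeas 0).aemeasurable
      aestronglyMeasurable_id :)]
    exact (convex_Icc a b).integral_mem isClosed_Icc (ae_of_all _ (hrange 0))
      (Integrable.of_mem_Icc a b (hmeas 0).aemeasurable (ae_of_all _ (hrange 0)))
  have hY (i : Fin N) (ω : Ω) : |X i ω - m| ∈ Set.Icc 0 (b - a) :=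
    ⟨abs_nonneg _, abs_sub_le_of_le_of_le (hrange i ω).1 (hrange i ω).2 hm.1 hm.2⟩
  have hmean : Pr.real {ω | ε ≤ |mhat ω - m|} ≤ δ / 2 := by
    have := measureReal_le_abs_sum_comp_div_card_sub_integral_le hindep hmeas hdist
      measurable_id' hrange hε
    rwa [Fintype.card_fin, htail] at this
  have hmad : Pr.real {ω | ε ≤ |(∑ i, |X i ω - m|) / N - d|} ≤ δ / 2 := by
    have := measureReal_le_abs_sum_comp_div_card_sub_integral_le hindep hmeas hdist
      (measurable_sub_const m).abs hY hε
    rwa [Fintype.card_fin, sub_zero, htail] at this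
  rw [show 1 - δ = 1 - (δ / 2 + δ / 2) by ring]
  refine ofReal_one_sub_add_le_measure hmean hmad fun ω hω ↦ ?_
  simp only [Set.mem_compl_iff, Set.mem_union, Set.mem_ofPred_eq, not_or, not_le] at hω
  have hdhat := abs_sum_abs_sub_div_card_sub_le univ (fun i ↦ X i ω) (mhat ω) m d
  simp only [card_univ, Fintype.card_fin] at hdhat
  exact ⟨hω.1.le, h3ε ▸ by linarith⟩

/-- Finite-sample guarantee: with probability at least `1 - δ`, the empirical mean and
empirical MAD of `N` i.i.d. samples from a distribution on `[a,b]` are within the stated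
distribution-free confidence bounds of the true mean and true MAD. -/
theorem stmt13 (a b : ℝ) (hab : a < b) (δ : ℝ) (hδ : δ ∈ Set.Ioo (0 : ℝ) 1)
    (N : ℕ) (hN : 1 ≤ N)
    (Ω : Type*) [MeasurableSpace Ω] (Pr : Measure Ω) [IsProbabilityMeasure Pr]
    (X : Fin N → Ω → ℝ) (hmeas : ∀ i, Measurable (X i))
    (hindep : iIndepFun X Pr)
    (Pstar : Measure ℝ) [IsProbabilityMeasure Pstar]
    (hdist : ∀ i, Measure.map (X i) Pr = Pstar)
    (hrange : ∀ i ω, X i ω ∈ Set.Icc a b) :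
    let m : ℝ := ∫ x, x ∂Pstar
    let d : ℝ := ∫ x, |x - m| ∂Pstar
    let mhat : Ω → ℝ := fun ω => (∑ i, X i ω) / N
    let dhat : Ω → ℝ := fun ω => (∑ i, |X i ω - mhat ω|) / N
    ENNReal.ofReal (1 - δ) ≤
      Pr {ω | |mhat ω - m| ≤ (b - a) * Real.sqrt (Real.log (4 / δ) / (2 * N)) ∧
             |dhat ω - d| ≤ (b - a) * Real.sqrt (9 * Real.log (4 / δ) / (2 * N))} :=
  stmt13_general a b hab δ hδ N hN Ω Pr X hmeas hindep Pstar hdist hrange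
end

section
/- Let n ≥ 1 be an integer and define h_n(ρ) = ρ(1−ρ^n)/(1−ρ^{n+1}) for ρ ∈ [0,1) ∪ (1,∞). Then h_n is strictly increasing and strictly concave on [0,1), and strictly increasing and strictly concave on (1,∞); moreover its derivative satisfies h_n'(ρ) = (nρ^{n+1} − (n+1)ρ^n + 1)/(1−ρ^{n+1})² > 0 for all ρ ∈ [0,1) ∪ (1,∞). -/
/-!
Writing `D = 1 − ρⁿ⁺¹`, the quotient rule gives `h_n' = N/D²` and `h_n'' = (n+1)ρⁿ⁻¹R/D³` with
`N = nρⁿ⁺¹ − (n+1)ρⁿ + 1` and `R = nρⁿ⁺² − (n+2)ρⁿ⁺¹ + (n+2)ρ − n`. Both polynomials vanish at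
`ρ = 1` to high order: `N = (ρ−1)²P` and `R = (ρ−1)³T`, where `P = ∑_{k<n} (k+1)ρᵏ`
(`weightedGeomSum`) and `T = ∑_{k<n} P_{k+1}` (`cumWeightedGeomSum`) have positive coefficients.
Since `(ρ−1)/D < 0` for every `ρ ≥ 0`, `ρ ≠ 1`, this gives `h_n' > 0` and `h_n'' < 0` on both
intervals at once.
-/

/-- The joining probability `h_n(ρ) = ρ(1−ρⁿ)/(1−ρⁿ⁺¹)`. -/
noncomputable def joinProb (n : ℕ) (ρ : ℝ) : ℝ := ρ * (1 - ρ ^ n) / (1 - ρ ^ (n + 1))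

noncomputable def joinProbDeriv (n : ℕ) (ρ : ℝ) : ℝ :=
  ((n : ℝ) * ρ ^ (n + 1) - ((n : ℝ) + 1) * ρ ^ n + 1) / (1 - ρ ^ (n + 1)) ^ 2

noncomputable def weightedGeomSum (n : ℕ) (x : ℝ) : ℝ :=
  ∑ k ∈ Finset.range n, ((k : ℝ) + 1) * x ^ k

noncomputable def cumWeightedGeomSum (n : ℕ) (x : ℝ) : ℝ :=
  ∑ k ∈ Finset.range n, weightedGeomSum (k + 1) x

lemma sq_sub_one_mul_weightedGeomSum (n : ℕ) (x : ℝ) :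
    (x - 1) ^ 2 * weightedGeomSum n x = n * x ^ (n + 1) - (n + 1) * x ^ n + 1 := by
  induction n with
  | zero => simp [weightedGeomSum]
  | succ n ih =>
    rw [weightedGeomSum, Finset.sum_range_succ, ← weightedGeomSum]
    push_cast
    linear_combination ih

lemma pow_three_sub_one_mul_cumWeightedGeomSum (n : ℕ) (x : ℝ) :
    (x - 1) ^ 3 * cumWeightedGeomSum n x =
      n * x ^ (n + 2) - (n + 2) * x ^ (n + 1) + (n + 2) * x - n := by
  induction n with
  | zero => simp [cumWeightedGeomSum]
  | succ n ih =>
    rw [cumWeightedGeomSum, Finset.sum_range_succ, ← cumWeightedGeomSum]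
    have hP := sq_sub_one_mul_weightedGeomSum (n + 1) x
    push_cast at hP ⊢
    linear_combination ih + (x - 1) * hP

lemma weightedGeomSum_pos {n : ℕ} (hn : 1 ≤ n) {x : ℝ} (hx : 0 ≤ x) :
    0 < weightedGeomSum n x :=
  Finset.sum_pos' (fun k _ => by positivity)
    ⟨0, Finset.mem_range.mpr hn, by norm_num⟩

lemma cumWeightedGeomSum_pos {n : ℕ} (hn : 1 ≤ n) {x : ℝ} (hx : 0 ≤ x) :
    0 < cumWeightedGeomSum n x :=
  Finset.sum_pos (fun k _ => weightedGeomSum_pos (Nat.le_add_left 1 k) hx)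
    ⟨0, Finset.mem_range.mpr hn⟩

lemma sub_one_div_one_sub_pow_neg {x : ℝ} (hx : x ∈ Set.Ici 0 \ {1}) (n : ℕ) :
    (x - 1) / (1 - x ^ (n + 1)) < 0 := by
  obtain ⟨hx0, hx1⟩ := hx
  rcases lt_or_gt_of_ne hx1 with hlt | hgt
  · exact div_neg_of_neg_of_pos (by linarith)
      (by linarith [pow_lt_one₀ hx0 hlt (n := n + 1) n.succ_ne_zero])
  · exact div_neg_of_pos_of_neg (by linarith)
      (by linarith [one_lt_pow₀ hgt (n := n + 1) n.succ_ne_zero])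

lemma one_sub_pow_ne_zero {x : ℝ} (hx : x ∈ Set.Ici 0 \ {1}) (n : ℕ) :
    1 - x ^ (n + 1) ≠ 0 := fun h => by
  simpa [h] using sub_one_div_one_sub_pow_neg hx n

lemma hasDerivAt_joinProb (n : ℕ) {x : ℝ} (hx : 1 - x ^ (n + 1) ≠ 0) :
    HasDerivAt (joinProb n) (joinProbDeriv n x) x := by
  have h : HasDerivAt (fun y => y * (1 - y ^ n) / (1 - y ^ (n + 1))) _ x :=
    ((hasDerivAt_id x).mul ((hasDerivAt_const x 1).sub (hasDerivAt_pow n x))).div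
      ((hasDerivAt_const x 1).sub (hasDerivAt_pow (n + 1) x)) hx
  refine h.congr_deriv ?_
  rcases n with _ | m
  · simp [joinProbDeriv]
  · simp only [joinProbDeriv, Pi.sub_apply, Pi.mul_apply, id, Nat.add_sub_cancel]
    push_cast
    ring

lemma hasDerivAt_joinProbDeriv {n : ℕ} (hn : 1 ≤ n) {x : ℝ} (hx : 1 - x ^ (n + 1) ≠ 0) :
    HasDerivAt (joinProbDeriv n)
      ((n + 1) * x ^ (n - 1) * cumWeightedGeomSum n x * ((x - 1) / (1 - x ^ (n + 1))) ^ 3) x := by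
  obtain ⟨m, rfl⟩ : ∃ m, n = m + 1 := ⟨n - 1, by omega⟩
  have h : HasDerivAt (fun y => (((m + 1 : ℕ) : ℝ) * y ^ (m + 1 + 1)
      - (((m + 1 : ℕ) : ℝ) + 1) * y ^ (m + 1) + 1) / (1 - y ^ (m + 1 + 1)) ^ 2) _ x :=
    ((((hasDerivAt_pow _ x).const_mul _).sub ((hasDerivAt_pow _ x).const_mul _)).add_const 1).div
      (((hasDerivAt_const x 1).sub (hasDerivAt_pow _ x)).pow 2) (pow_ne_zero 2 hx)
  refine h.congr_deriv ?_
  have hR := pow_three_sub_one_mul_cumWeightedGeomSum (m + 1) x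
  simp only [Pi.sub_apply, Nat.add_sub_cancel]
  push_cast at hR ⊢
  rw [div_pow, mul_div_assoc', div_eq_div_iff (pow_ne_zero 2 (pow_ne_zero 2 hx)) (pow_ne_zero 3 hx)]
  linear_combination (-(m + 2) * x ^ m * (1 - x ^ (m + 2)) ^ 4) * hR

lemma joinProbDeriv_eq (n : ℕ) (x : ℝ) :
    joinProbDeriv n x = weightedGeomSum n x * ((x - 1) / (1 - x ^ (n + 1))) ^ 2 := by
  rw [joinProbDeriv, ← sq_sub_one_mul_weightedGeomSum, div_pow, mul_div_assoc']
  ring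

lemma joinProbDeriv_pos {n : ℕ} (hn : 1 ≤ n) {x : ℝ} (hx : x ∈ Set.Ici 0 \ {1}) :
    0 < joinProbDeriv n x := by
  rw [joinProbDeriv_eq]
  exact mul_pos (weightedGeomSum_pos hn hx.1)
    (pow_two_pos_of_ne_zero (sub_one_div_one_sub_pow_neg hx n).ne)

lemma deriv_joinProbDeriv_neg {n : ℕ} (hn : 1 ≤ n) {x : ℝ} (hx : x ∈ Set.Ioi 0 \ {1}) :
    deriv (joinProbDeriv n) x < 0 := by
  have hx' : x ∈ Set.Ici 0 \ {1} := ⟨Set.Ioi_subset_Ici_self hx.1, hx.2⟩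
  rw [(hasDerivAt_joinProbDeriv hn (one_sub_pow_ne_zero hx' n)).deriv]
  have := cumWeightedGeomSum_pos hn hx'.1
  have := pow_pos (Set.mem_Ioi.mp hx.1) (n - 1)
  exact mul_neg_of_pos_of_neg (by positivity)
    (Odd.pow_neg (by decide) (sub_one_div_one_sub_pow_neg hx' n))

lemma continuousOn_joinProb (n : ℕ) {s : Set ℝ} (hs : s ⊆ Set.Ici 0 \ {1}) :
    ContinuousOn (joinProb n) s := fun _ hx =>
  (hasDerivAt_joinProb n (one_sub_pow_ne_zero (hs hx) n)).continuousAt.continuousWithinAt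

lemma strictMonoOn_joinProb {n : ℕ} (hn : 1 ≤ n) {s : Set ℝ} (hconv : Convex ℝ s)
    (hs : s ⊆ Set.Ici 0 \ {1}) : StrictMonoOn (joinProb n) s :=
  strictMonoOn_of_deriv_pos hconv (continuousOn_joinProb n hs) fun x hx => by
    have hx := hs (interior_subset hx)
    rw [(hasDerivAt_joinProb n (one_sub_pow_ne_zero hx n)).deriv]
    exact joinProbDeriv_pos hn hx

lemma strictConcaveOn_joinProb {n : ℕ} (hn : 1 ≤ n) {s : Set ℝ} (hconv : Convex ℝ s)
    (hs : s ⊆ Set.Ici 0 \ {1}) : StrictConcaveOn ℝ s (joinProb n) := by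
  have hint : interior s ⊆ Set.Ioi 0 \ {1} := fun x hx =>
    ⟨by simpa using interior_mono (fun y hy => (hs hy).1) hx, (hs (interior_subset hx)).2⟩
  have hanti : StrictAntiOn (joinProbDeriv n) (interior s) := by
    refine strictAntiOn_of_deriv_neg hconv.interior (fun x hx => ?_) fun x hx => ?_
    · exact (hasDerivAt_joinProbDeriv hn (one_sub_pow_ne_zero (hs (interior_subset hx)) n)
        ).continuousAt.continuousWithinAt
    · rw [interior_interior] at hx
      exact deriv_joinProbDeriv_neg hn (hint hx)
  refine (hanti.congr fun x hx => ?_).strictConcaveOn_of_deriv hconv (continuousOn_joinProb n hs)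
  exact ((hasDerivAt_joinProb n (one_sub_pow_ne_zero (hs (interior_subset hx)) n)).deriv).symm

/-- `h_n` is strictly increasing and strictly concave on `[0,1)` and on `(1,∞)`, and its
derivative equals `(nρⁿ⁺¹ − (n+1)ρⁿ + 1)/(1−ρⁿ⁺¹)²`, which is positive there. -/
theorem stmt16 (n : ℕ) (hn : 1 ≤ n) :
    StrictMonoOn (joinProb n) (Set.Ico (0 : ℝ) 1) ∧
    StrictConcaveOn ℝ (Set.Ico (0 : ℝ) 1) (joinProb n) ∧
    StrictMonoOn (joinProb n) (Set.Ioi (1 : ℝ)) ∧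
    StrictConcaveOn ℝ (Set.Ioi (1 : ℝ)) (joinProb n) ∧
    ∀ ρ : ℝ, ρ ∈ Set.Ico (0 : ℝ) 1 ∪ Set.Ioi (1 : ℝ) →
      deriv (joinProb n) ρ =
        ((n : ℝ) * ρ ^ (n + 1) - ((n : ℝ) + 1) * ρ ^ n + 1) / (1 - ρ ^ (n + 1)) ^ 2 ∧
      0 < ((n : ℝ) * ρ ^ (n + 1) - ((n : ℝ) + 1) * ρ ^ n + 1) / (1 - ρ ^ (n + 1)) ^ 2 := by
  have hIco : Set.Ico (0 : ℝ) 1 ⊆ Set.Ici 0 \ {1} := fun x hx => ⟨hx.1, hx.2.ne⟩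
  have hIoi : Set.Ioi (1 : ℝ) ⊆ Set.Ici 0 \ {1} := fun x (hx : 1 < x) =>
    ⟨Set.mem_Ici.mpr (by linarith), hx.ne'⟩
  refine ⟨strictMonoOn_joinProb hn (convex_Ico 0 1) hIco,
    strictConcaveOn_joinProb hn (convex_Ico 0 1) hIco,
    strictMonoOn_joinProb hn (convex_Ioi 1) hIoi,
    strictConcaveOn_joinProb hn (convex_Ioi 1) hIoi, fun ρ hρ => ?_⟩
  have hρ : ρ ∈ Set.Ici 0 \ {1} := Set.union_subset hIco hIoi hρ
  exact ⟨(hasDerivAt_joinProb n (one_sub_pow_ne_zero hρ n)).deriv, joinProbDeriv_pos hn hρ⟩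
end

section
/- Let v ≥ 1 be a real number and define g_v(ρ) = vρ/(1−ρ^v) − ρ/(1−ρ) for ρ ∈ [0,1), where ρ^v = exp(v·log ρ) for ρ > 0 and 0^v = 0. Then g_v is concave on [0,1). -/
/-!
Write `g_v = k_v - k_1` with `k_s(x) = s x / (1 - x ^ s)`, so that `g_v'' = Φ v - Φ 1` where
`Φ s = k_s''(x)`. For fixed `x ∈ (0, 1)`, `Φ` is decreasing on `[1, ∞)`: with `t = x ^ s`, the
numerator of `∂Φ/∂s` is a nonnegative combination of `log t * (1 + 4t + t²) + 3(1 - t²)` and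
`log t * (1 + t) + 2(1 - t)`, both `≤ 0` by the Padé-type bounds
`log t ≤ 3(t² - 1)/(t² + 4t + 1) ≤ 2(t - 1)/(t + 1)` on `(0, 1]`.
-/

open Real Set

lemma log_le_three_mul_sq_sub_one_div {t : ℝ} (ht₀ : 0 < t) (ht₁ : t ≤ 1) :
    log t ≤ 3 * (t ^ 2 - 1) / (t ^ 2 + 4 * t + 1) := by
  let h : ℝ → ℝ := fun y => log y - 3 * (y ^ 2 - 1) / (y ^ 2 + 4 * y + 1)
  have hderiv : ∀ y : ℝ, 0 < y →
      HasDerivAt h ((1 - y) ^ 4 / (y * (y ^ 2 + 4 * y + 1) ^ 2)) y := by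
    intro y hy
    have hD : y ^ 2 + 4 * y + 1 ≠ 0 := by positivity
    refine ((hasDerivAt_log hy.ne').sub ((((hasDerivAt_pow 2 y).sub_const 1).const_mul 3).div
      (((hasDerivAt_pow 2 y).add ((hasDerivAt_id y).const_mul 4)).add_const 1) hD)).congr_deriv ?_
    simp only [id_eq, Pi.add_apply]
    field_simp
    ring
  have hmono : MonotoneOn h (Ioi 0) := by
    refine monotoneOn_of_hasDerivWithinAt_nonneg (convex_Ioi 0)
      (f' := fun y => (1 - y) ^ 4 / (y * (y ^ 2 + 4 * y + 1) ^ 2))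
      (fun y hy => (hderiv y hy).continuousAt.continuousWithinAt) ?_ ?_ <;>
      rw [interior_Ioi]
    · exact fun y hy => (hderiv y hy).hasDerivWithinAt
    · intro y (hy : 0 < y)
      positivity
  have := hmono ht₀ (mem_Ioi.2 one_pos) ht₁
  simp [h] at this
  linarith

lemma log_mul_add_three_mul_one_sub_sq_nonpos {t : ℝ} (ht₀ : 0 < t) (ht₁ : t ≤ 1) :
    log t * (1 + 4 * t + t ^ 2) + 3 * (1 - t ^ 2) ≤ 0 := by
  have h := log_le_three_mul_sq_sub_one_div ht₀ ht₁
  rw [le_div_iff₀ (by positivity)] at h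
  linarith

lemma log_mul_add_two_mul_one_sub_nonpos {t : ℝ} (ht₀ : 0 < t) (ht₁ : t ≤ 1) :
    log t * (1 + t) + 2 * (1 - t) ≤ 0 := by
  have h := log_mul_add_three_mul_one_sub_sq_nonpos ht₀ ht₁
  have : 0 < 1 + 4 * t + t ^ 2 := by positivity
  -- multiplied by `1 + 4t + t²`, the left side is at most `-(1 - t)³` by `h`
  nlinarith [pow_nonneg (sub_nonneg.2 ht₁) 3]

noncomputable def rpowRatio (s x : ℝ) : ℝ := s * x / (1 - x ^ s)

noncomputable def rpowRatioDeriv (s x : ℝ) : ℝ := s * (1 + (s - 1) * x ^ s) / (1 - x ^ s) ^ 2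

noncomputable def rpowRatioDeriv2 (s x : ℝ) : ℝ :=
  s ^ 2 * x ^ (s - 1) * (1 + s + (s - 1) * x ^ s) / (1 - x ^ s) ^ 3

variable {s x : ℝ}

lemma one_sub_rpow_pos (hs : 0 < s) (hx₀ : 0 ≤ x) (hx₁ : x < 1) : 0 < 1 - x ^ s :=
  sub_pos.2 (rpow_lt_one hx₀ hx₁ hs)

lemma continuousOn_rpowRatio (hs : 0 < s) : ContinuousOn (rpowRatio s) (Ico 0 1) := by
  intro x ⟨hx₀, hx₁⟩
  exact ((continuousAt_const.mul continuousAt_id).div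
    (continuousAt_const.sub (continuousAt_rpow_const x s (Or.inr hs.le)))
    (one_sub_rpow_pos hs hx₀ hx₁).ne').continuousWithinAt

lemma hasDerivAt_rpowRatio (hs : 0 < s) (hx₀ : 0 < x) (hx₁ : x < 1) :
    HasDerivAt (rpowRatio s) (rpowRatioDeriv s x) x := by
  have hpow := hasDerivAt_rpow_const (p := s) (Or.inl hx₀.ne')
  have hD := (one_sub_rpow_pos hs hx₀.le hx₁).ne'
  refine (((hasDerivAt_id x).const_mul s).div (hpow.const_sub 1) hD).congr_deriv ?_
  rw [rpowRatioDeriv, rpow_sub_one hx₀.ne', id_eq]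
  field_simp
  ring

lemma hasDerivAt_rpowRatioDeriv (hs : 0 < s) (hx₀ : 0 < x) (hx₁ : x < 1) :
    HasDerivAt (rpowRatioDeriv s) (rpowRatioDeriv2 s x) x := by
  have hpow := hasDerivAt_rpow_const (p := s) (Or.inl hx₀.ne')
  have hD := (one_sub_rpow_pos hs hx₀.le hx₁).ne'
  refine ((((hpow.const_mul (s - 1)).const_add 1).const_mul s).div ((hpow.const_sub 1).pow 2)
    (pow_ne_zero 2 hD)).congr_deriv ?_
  rw [rpowRatioDeriv2, Pi.pow_apply]
  field_simp
  ring

lemma hasDerivAt_rpowRatioDeriv2_exponent (hs : 0 < s) (hx₀ : 0 < x) (hx₁ : x < 1) :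
    HasDerivAt (rpowRatioDeriv2 · x)
      (x ^ (s - 1) * (s ^ 2 * (s * log x * (1 + 4 * x ^ s + (x ^ s) ^ 2) + 3 * (1 - (x ^ s) ^ 2))
        + s * (1 - x ^ s) * (s * log x * (1 + x ^ s) + 2 * (1 - x ^ s))) / (1 - x ^ s) ^ 4) s := by
  have hpow := (hasDerivAt_id s).const_rpow hx₀
  have hpow₁ := ((hasDerivAt_id s).sub_const 1).const_rpow hx₀
  have hD := (one_sub_rpow_pos hs hx₀.le hx₁).ne'
  refine ((((hasDerivAt_pow 2 s).mul hpow₁).mul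
    (((hasDerivAt_id s).const_add 1).add (((hasDerivAt_id s).sub_const 1).mul hpow))).div
    ((hpow.const_sub 1).pow 3) (pow_ne_zero 3 hD)).congr_deriv ?_
  simp only [id_eq, Pi.mul_apply, Pi.add_apply, Pi.pow_apply]
  rw [rpow_sub_one hx₀.ne']
  field_simp
  ring

lemma antitoneOn_rpowRatioDeriv2_exponent (hx₀ : 0 < x) (hx₁ : x < 1) :
    AntitoneOn (rpowRatioDeriv2 · x) (Ici 1) := by
  have hderiv (s : ℝ) (hs : 1 ≤ s) := hasDerivAt_rpowRatioDeriv2_exponent (by linarith) hx₀ hx₁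
  refine antitoneOn_of_hasDerivWithinAt_nonpos (convex_Ici 1)
    (fun s hs => (hderiv s hs).continuousAt.continuousWithinAt)
    (fun s hs => (hderiv s (interior_subset hs)).hasDerivWithinAt) ?_
  rw [interior_Ici]
  intro s (hs : 1 < s)
  have ht₀ : 0 < x ^ s := rpow_pos_of_pos hx₀ s
  have ht₁ : 0 < 1 - x ^ s := one_sub_rpow_pos (by linarith) hx₀.le hx₁
  have hlog : log (x ^ s) = s * log x := log_rpow hx₀ s
  have hA := log_mul_add_three_mul_one_sub_sq_nonpos ht₀ (by linarith)
  have hB := log_mul_add_two_mul_one_sub_nonpos ht₀ (by linarith)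
  rw [hlog] at hA hB
  refine div_nonpos_of_nonpos_of_nonneg
    (mul_nonpos_of_nonneg_of_nonpos (rpow_nonneg hx₀.le _) ?_) (by positivity)
  have : 0 ≤ s * (1 - x ^ s) := by positivity
  linarith [mul_nonpos_of_nonneg_of_nonpos (sq_nonneg s) hA,
    mul_nonpos_of_nonneg_of_nonpos this hB]

/-- For real `v ≥ 1`, the function `g_v(ρ) = vρ/(1−ρ^v) − ρ/(1−ρ)` is concave on `[0,1)`,
where `ρ^v` denotes the real power `exp(v log ρ)` for `ρ > 0`, with `0^v = 0`. -/
theorem stmt17 (v : ℝ) (hv : 1 ≤ v) :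
    ConcaveOn ℝ (Set.Ico (0 : ℝ) 1)
      (fun ρ : ℝ => v * ρ / (1 - ρ ^ v) - ρ / (1 - ρ)) := by
  have hv₀ : 0 < v := by linarith
  have hg : (fun ρ : ℝ => v * ρ / (1 - ρ ^ v) - ρ / (1 - ρ)) =
      fun ρ => rpowRatio v ρ - rpowRatio 1 ρ := by
    simp [rpowRatio]
  rw [hg]
  refine concaveOn_of_hasDerivWithinAt2_nonpos (convex_Ico 0 1)
    (f' := fun x => rpowRatioDeriv v x - rpowRatioDeriv 1 x)
    (f'' := fun x => rpowRatioDeriv2 v x - rpowRatioDeriv2 1 x)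
    ((continuousOn_rpowRatio hv₀).sub (continuousOn_rpowRatio one_pos)) ?_ ?_ ?_ <;>
    rw [interior_Ico] <;> rintro x ⟨hx₀, hx₁⟩
  · exact ((hasDerivAt_rpowRatio hv₀ hx₀ hx₁).sub
      (hasDerivAt_rpowRatio one_pos hx₀ hx₁)).hasDerivWithinAt
  · exact ((hasDerivAt_rpowRatioDeriv hv₀ hx₀ hx₁).sub
      (hasDerivAt_rpowRatioDeriv one_pos hx₀ hx₁)).hasDerivWithinAt
  · exact sub_nonpos.2 <| antitoneOn_rpowRatioDeriv2_exponent hx₀ hx₁ self_mem_Ici hv hv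
end

section
/- Let n ≥ 1 be an integer. Then the polynomial ψ_n(ρ) = n·ρ^{n+2} − (n+2)·ρ^{n+1} + (n+2)·ρ − n satisfies ψ_n(ρ) < 0 for every ρ ∈ [0,1), ψ_n(1) = 0, and ψ_n(ρ) > 0 for every ρ ∈ (1,∞). -/
lemma psi_factor (n : ℕ) (ρ : ℝ) :
    (n : ℝ) * ρ ^ (n + 2) - ((n : ℝ) + 2) * ρ ^ (n + 1) + ((n : ℝ) + 2) * ρ - n
      = (ρ - 1) * ∑ k ∈ Finset.range n, (1 - ρ ^ (k + 1)) * (1 - ρ ^ (n - k)) := by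
  have hterm : ∀ k ∈ Finset.range n,
      (1 - ρ ^ (k + 1)) * (1 - ρ ^ (n - k))
        = 1 + ρ ^ (n + 1) - ρ ^ (k + 1) - ρ ^ (n - k) := by
    intro k hk
    have hk' : k < n := Finset.mem_range.mp hk
    have : ρ ^ (k + 1) * ρ ^ (n - k) = ρ ^ (n + 1) := by
      rw [← pow_add]; congr 1; omega
    linear_combination this
  rw [Finset.sum_congr rfl hterm]
  have hrefl : ∑ k ∈ Finset.range n, ρ ^ (n - k) = ∑ k ∈ Finset.range n, ρ ^ (k + 1) := by
    rw [← Finset.sum_range_reflect]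
    apply Finset.sum_congr rfl
    intro k hk
    have := Finset.mem_range.mp hk
    congr 1; omega
  simp only [Finset.sum_sub_distrib, Finset.sum_add_distrib, Finset.sum_const,
    Finset.card_range, nsmul_eq_mul, hrefl]
  have hS : (ρ - 1) * ∑ k ∈ Finset.range n, ρ ^ (k + 1) = ρ ^ (n + 1) - ρ := by
    have := geom_sum_mul ρ n
    have h2 : ∑ k ∈ Finset.range n, ρ ^ (k + 1) = ρ * ∑ k ∈ Finset.range n, ρ ^ k := by
      rw [Finset.mul_sum]; apply Finset.sum_congr rfl; intro k _; ring
    rw [h2]; linear_combination ρ * this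
  have hp2 : ρ ^ (n + 2) = ρ ^ (n + 1) * ρ := by rw [← pow_succ]
  nlinarith [hS, hp2]

/-- The polynomial `ψ_n(ρ) = nρⁿ⁺² − (n+2)ρⁿ⁺¹ + (n+2)ρ − n` is negative on `[0,1)`,
vanishes at `ρ = 1`, and is positive on `(1,∞)`. -/
theorem stmt19 (n : ℕ) (hn : 1 ≤ n) :
    (∀ ρ : ℝ, ρ ∈ Set.Ico (0 : ℝ) 1 →
      (n : ℝ) * ρ ^ (n + 2) - ((n : ℝ) + 2) * ρ ^ (n + 1) + ((n : ℝ) + 2) * ρ - n < 0) ∧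
    ((n : ℝ) * (1 : ℝ) ^ (n + 2) - ((n : ℝ) + 2) * (1 : ℝ) ^ (n + 1) +
      ((n : ℝ) + 2) * 1 - n = 0) ∧
    (∀ ρ : ℝ, ρ ∈ Set.Ioi (1 : ℝ) →
      0 < (n : ℝ) * ρ ^ (n + 2) - ((n : ℝ) + 2) * ρ ^ (n + 1) + ((n : ℝ) + 2) * ρ - n) := by
  refine ⟨?_, by simp, ?_⟩
  · intro ρ ⟨h0, h1⟩
    rw [psi_factor]
    apply mul_neg_of_neg_of_pos (by linarith)
    apply Finset.sum_pos'
    · intro k hk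
      have hk' := Finset.mem_range.mp hk
      apply mul_nonneg
      · have := pow_le_one₀ h0 h1.le (n := k + 1); linarith
      · have := pow_le_one₀ h0 h1.le (n := n - k); linarith
    · refine ⟨0, Finset.mem_range.mpr (by omega), ?_⟩
      apply mul_pos
      · have := pow_lt_one₀ h0 h1 (n := 0 + 1) (by omega); linarith
      · have := pow_lt_one₀ h0 h1 (n := n - 0) (by omega); linarith
  · intro ρ h1
    simp only [Set.mem_Ioi] at h1
    rw [psi_factor]
    apply mul_pos (by linarith)
    apply Finset.sum_pos
    · intro k hk
      have hk' := Finset.mem_range.mp hk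
      apply mul_pos_of_neg_of_neg
      · have := one_lt_pow₀ h1 (n := k + 1) (by omega); linarith
      · have := one_lt_pow₀ h1 (n := n - k) (by omega); linarith
    · exact Finset.nonempty_range_iff.mpr (by omega)
end
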